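/- arXiv:1608.02219 — 4 statements merged into one kernel-verified Lean document; each statement's English description precedes it below -/
import Mathlib

section
/- Periodic approximation of Gordon potentials: Let μ be a real local measure with ‖μ‖_unif < ∞ and C > 0. Assume there is a sequence (p_m) in (0, ∞) with p_m → ∞ such that e^{C·p_m} ‖μ − μ(·+p_m)‖_{[−p_m, p_m]} → 0 as m → ∞. Then there exist real local measures (μ_m)_{m∈ℕ} and real numbers (α_m)_{m∈ℕ} with 0 < α_m ≤ p_m/2 and inf_{m∈ℕ} α_m > 0 such that: each μ_m is p_m-periodic (μ_m(B + p_m) = μ_m(B) for all bounded Borel sets B); e^{C·p_m} ‖μ − μ_m‖_{[−p_m, 2p_m]} → 0 as m → ∞; μ_m(B) = μ(B) for every bounded Borel set B ⊆ [α_m, p_m − α_m]; and ‖μ_m‖_unif ≤ (1 + 1/(2α_m)) ‖μ‖_unif for all m ∈ ℕ. -/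
open MeasureTheory Set Filter

noncomputable section

/-- A nonnegative Borel measure on `ℝ` is finite on bounded sets. -/
def FiniteOnBounded (ν : MeasureTheory.Measure ℝ) : Prop :=
  ∀ s : Set ℝ, Bornology.IsBounded s → ν s < ⊤

/-- `⨆ t, ν ((t, t+1])` in `ℝ≥0∞`. -/
def unifE (ν : MeasureTheory.Measure ℝ) : ENNReal := ⨆ t : ℝ, ν (Set.Ioc t (t + 1))

/-- The uniform norm `‖ν‖_unif` as a real number. -/
def unifNorm (ν : MeasureTheory.Measure ℝ) : ℝ := (unifE ν).toReal

/-- Signed value of the real local measure `μ = (μp, μm)` on a set `B`. -/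
def lmVal (μp μm : MeasureTheory.Measure ℝ) (B : Set ℝ) : ℝ := (μp B).toReal - (μm B).toReal

/-- Signed integral `∫ f dμ` w.r.t. the real local measure `μ = (μp, μm)`. -/
def lmInt (μp μm : MeasureTheory.Measure ℝ) (f : ℝ → ℝ) : ℝ := (∫ x, f x ∂μp) - (∫ x, f x ∂μm)

/-- The (topological) support of a measure on `ℝ`. -/
def measSupport (ρ : MeasureTheory.Measure ℝ) : Set ℝ :=
  {x : ℝ | ∀ ε : ℝ, 0 < ε → 0 < ρ (Set.Ioo (x - ε) (x + ε))}

/-- `p` is a period of `ρ`, i.e. `p ≠ 0` and `ρ (B + p) = ρ B` for all `B`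
(note `B + p = (· - p) ⁻¹' B`). -/
def IsPeriod (ρ : MeasureTheory.Measure ℝ) (p : ℝ) : Prop :=
  p ≠ 0 ∧ ∀ B : Set ℝ, ρ ((fun x => x - p) ⁻¹' B) = ρ B

/-- Supremum norm of a (bounded) function. -/
def supNorm (a : ℝ → ℝ) : ℝ := sSup (Set.range a)

/-- The class `AM(ℝ)`: `a` Borel measurable with `0 < inf a` and `sup a < ∞`, and
`μ = (μp, μm)` a real local measure with `‖μ‖_unif < ∞` and `|μ|(ℝ ∖ supp ρ) = 0`. -/
structure AM (ρ : MeasureTheory.Measure ℝ) (a : ℝ → ℝ)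
    (μp μm : MeasureTheory.Measure ℝ) : Prop where
  meas_a : Measurable a
  inf_pos : 0 < ⨅ x : ℝ, a x
  bddAbove : BddAbove (Set.range a)
  finp : FiniteOnBounded μp
  finm : FiniteOnBounded μm
  unif_lt_top : unifE (μp + μm) < ⊤
  supp_sub : (μp + μm) ((measSupport ρ)ᶜ) = 0

/-- `(u, v)` is a solution of `H_{a,μ} u = z u` with weight `ρ`
(`v` playing the role of `a·u'`). -/
structure IsSolution (a : ℝ → ℝ) (μp μm ρ : MeasureTheory.Measure ℝ) (z : ℝ)
    (u v : ℝ → ℝ) : Prop where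
  meas_u : Measurable u
  meas_v : Measurable v
  eq_u : ∀ t : ℝ, u t = u 0 + ∫ s in (0:ℝ)..t, v s / a s
  eq_v : ∀ s t : ℝ, s ≤ t →
    v t - v s = ((∫ x in Set.Ioc s t, u x ∂μp) - (∫ x in Set.Ioc s t, u x ∂μm))
      - z * ∫ x in Set.Ioc s t, u x ∂ρ

/-- `(u, v)` is a solution of `H_{a,μ} u = 0`. -/
structure IsSolution0 (a : ℝ → ℝ) (μp μm : MeasureTheory.Measure ℝ)
    (u v : ℝ → ℝ) : Prop where
  meas_u : Measurable u
  meas_v : Measurable v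
  eq_u : ∀ t : ℝ, u t = u 0 + ∫ s in (0:ℝ)..t, v s / a s
  eq_v : ∀ s t : ℝ, s ≤ t →
    v t - v s = (∫ x in Set.Ioc s t, u x ∂μp) - (∫ x in Set.Ioc s t, u x ∂μm)

/-- Wasserstein-type seminorm `‖μ − ν‖_I` of the difference of two real local measures. -/
def wNorm (μp μm νp νm : MeasureTheory.Measure ℝ) (I : Set ℝ) : ℝ :=
  sSup {r : ℝ | ∃ w : ℝ → ℝ, LipschitzWith 1 w ∧ HasCompactSupport w ∧
    tsupport w ⊆ I ∧ Metric.diam (tsupport w) ≤ 2 ∧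
    r = |lmInt μp μm w - lmInt νp νm w|}

/-- Translate of a measure: `(lmTranslate ν p) B = ν (B + p)`. -/
def lmTranslate (ν : MeasureTheory.Measure ℝ) (p : ℝ) : MeasureTheory.Measure ℝ :=
  MeasureTheory.Measure.map (fun x => x - p) ν

/-- The primitive `φ_μ` of a real local measure `μ = (μp, μm)`. -/
def phiLM (μp μm : MeasureTheory.Measure ℝ) (t : ℝ) : ℝ :=
  if 0 ≤ t then lmVal μp μm (Set.Ioc 0 t) else -(lmVal μp μm (Set.Ioc t 0))


/-!
The approximant is built from a continuous bump `χ = bump p β` which vanishes outside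
`(0, p + β)`, equals `1` on `[β, p]`, and whose translates `χ (· - k p)` sum to one. The
periodization of `χ μ` is `p`-periodic and coincides with `μ` on `[β, p]`; since a unit interval
meets boundedly many translates of `(0, p + β)`, its uniform norm is controlled by that of `μ`.
For a test function `w` supported in `[-p, 2p]` only the translates with `k ∈ {-2, …, 1}` meet
the support of `w`, and `∫ w dμ - ∫ w dμₚ` rearranges into four terms `∫ v dμ - ∫ v dμ(· + p)`
whose test functions `v = w (· + s) χ (· + t)` live in `[-p, p]` and are `(1 + 6 / β)`-Lipschitz.
Hence `‖μ - μₚ‖_{[-p, 2p]} ≤ 4 (1 + 6 / β) ‖μ - μ(· + p)‖_{[-p, p]}`, and `β = min (1/8) (p/8)`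
gives the constants of the statement.
-/

open scoped ENNReal NNReal

namespace GordonPotential

section Bump

variable {p β : ℝ}

def ramp (β x : ℝ) : ℝ := min 1 (max 0 (x / β))

lemma ramp_nonneg (β x : ℝ) : 0 ≤ ramp β x :=
  le_min zero_le_one (le_max_left _ _)

lemma ramp_le_one (β x : ℝ) : ramp β x ≤ 1 := min_le_left _ _

lemma ramp_of_nonpos (hβ : 0 ≤ β) {x : ℝ} (hx : x ≤ 0) : ramp β x = 0 := by
  simp [ramp, max_eq_left (div_nonpos_of_nonpos_of_nonneg hx hβ)]

lemma ramp_of_le (hβ : 0 < β) {x : ℝ} (hx : β ≤ x) : ramp β x = 1 :=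
  min_eq_left (le_max_of_le_right ((one_le_div hβ).2 hx))

lemma monotone_ramp (hβ : 0 ≤ β) : Monotone (ramp β) := fun _ _ hxy =>
  min_le_min le_rfl (max_le_max le_rfl (div_le_div_of_nonneg_right hxy hβ))

@[fun_prop]
lemma continuous_ramp (β : ℝ) : Continuous (ramp β) := by
  unfold ramp; fun_prop

lemma lipschitzWith_ramp (hβ : 0 < β) : LipschitzWith (Real.toNNReal β⁻¹) (ramp β) := by
  refine LipschitzWith.of_dist_le_mul fun x y => ?_
  rw [Real.coe_toNNReal _ (inv_nonneg.2 hβ.le), Real.dist_eq, Real.dist_eq]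
  calc |ramp β x - ramp β y| ≤ max |1 - 1| |max 0 (x / β) - max 0 (y / β)| :=
        abs_min_sub_min_le_max _ _ _ _
    _ ≤ |x / β - y / β| := by
        rw [sub_self, abs_zero, max_eq_right (abs_nonneg _), max_comm 0, max_comm 0]
        exact abs_max_sub_max_le_abs _ _ 0
    _ = β⁻¹ * |x - y| := by
        rw [← sub_div, abs_div, abs_of_pos hβ, div_eq_inv_mul]

/-- A continuous bump rising on `[0, β]` and falling on `[p, p + β]`; for `β ≤ p` its translates
by `ℤ p` form a partition of unity. -/
def bump (p β x : ℝ) : ℝ := ramp β x - ramp β (x - p)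

lemma bump_nonneg (hp : 0 ≤ p) (hβ : 0 ≤ β) (x : ℝ) : 0 ≤ bump p β x :=
  sub_nonneg.2 (monotone_ramp hβ (by linarith))

lemma bump_le_one (x : ℝ) : bump p β x ≤ 1 := by
  have := ramp_nonneg β (x - p)
  have := ramp_le_one β x
  unfold bump; linarith

lemma abs_bump_le_one (hp : 0 ≤ p) (hβ : 0 ≤ β) (x : ℝ) : |bump p β x| ≤ 1 :=
  abs_le.2 ⟨by linarith [bump_nonneg hp hβ x], bump_le_one x⟩

lemma bump_eq_one (hβ : 0 < β) {x : ℝ} (h₁ : β ≤ x) (h₂ : x ≤ p) : bump p β x = 1 := by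
  rw [bump, ramp_of_le hβ h₁, ramp_of_nonpos hβ.le (by linarith), sub_zero]

lemma bump_of_nonpos (hp : 0 ≤ p) (hβ : 0 ≤ β) {x : ℝ} (hx : x ≤ 0) : bump p β x = 0 := by
  rw [bump, ramp_of_nonpos hβ hx, ramp_of_nonpos hβ (by linarith), sub_zero]

lemma bump_of_ge (hp : 0 ≤ p) (hβ : 0 < β) {x : ℝ} (hx : p + β ≤ x) : bump p β x = 0 := by
  rw [bump, ramp_of_le hβ (by linarith), ramp_of_le hβ (by linarith), sub_self]

lemma mem_Ioo_of_bump_ne_zero (hp : 0 ≤ p) (hβ : 0 < β) {x : ℝ} (hx : bump p β x ≠ 0) :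
    x ∈ Ioo 0 (p + β) :=
  ⟨not_le.1 fun h => hx (bump_of_nonpos hp hβ.le h), not_le.1 fun h => hx (bump_of_ge hp hβ h)⟩

@[fun_prop]
lemma continuous_bump (p β : ℝ) : Continuous (bump p β) := by
  unfold bump; fun_prop

lemma _root_.LipschitzWith.comp_add_const {K : ℝ≥0} {f : ℝ → ℝ} (hf : LipschitzWith K f) (c : ℝ) :
    LipschitzWith K fun x => f (x + c) := by
  simpa [Function.comp_def] using hf.comp (isometry_add_right c).lipschitz

lemma lipschitzWith_bump (hβ : 0 < β) (p : ℝ) :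
    LipschitzWith (2 * Real.toNNReal β⁻¹) (bump p β) := by
  have h := (lipschitzWith_ramp hβ).sub ((lipschitzWith_ramp hβ).comp_add_const (-p))
  simp only [← sub_eq_add_neg, ← two_mul] at h
  exact h

lemma bump_add_bump_add_bump_add_bump (hβ : 0 < β) (hβp : β ≤ p) {x : ℝ}
    (hx : x ∈ Icc (-p) (2 * p)) :
    bump p β (x + 2 * p) + bump p β (x + p) + bump p β x + bump p β (x - p) = 1 := by
  have h₁ : ramp β (x + 2 * p) = 1 := ramp_of_le hβ (by linarith [hx.1])
  have h₂ : ramp β (x - p - p) = 0 := ramp_of_nonpos hβ.le (by linarith [hx.2])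
  simp only [bump, add_sub_cancel_right, show x + 2 * p - p = x + p by ring] at h₁ h₂ ⊢
  linarith

end Bump

section Periodize

variable {σ ρ ν : Measure ℝ} {p : ℝ}

lemma isLocallyFiniteMeasure_of_unifE_lt_top (h : unifE ν < ⊤) : IsLocallyFiniteMeasure ν :=
  ⟨fun x => ⟨Ioc (x - 2⁻¹) (x - 2⁻¹ + 1), Ioc_mem_nhds (by linarith) (by linarith),
    (le_iSup (fun t => ν (Ioc t (t + 1))) _).trans_lt h⟩⟩

lemma finiteOnBounded_of_unifE_lt_top (h : unifE ν < ⊤) : FiniteOnBounded ν := by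
  have := isLocallyFiniteMeasure_of_unifE_lt_top h
  exact fun _ hs => (measure_mono subset_closure).trans_lt hs.isCompact_closure.measure_lt_top

lemma unifE_mono (h : σ ≤ ρ) : unifE σ ≤ unifE ρ :=
  iSup_mono fun _ => h _

lemma unifE_lmTranslate_le (ρ : Measure ℝ) (p : ℝ) : unifE (lmTranslate ρ p) ≤ unifE ρ := by
  refine iSup_le fun t => ?_
  rw [lmTranslate, Measure.map_apply (measurable_sub_const p) measurableSet_Ioc]
  convert le_iSup (fun t => ρ (Ioc t (t + 1))) (t + p) using 2
  ext x
  simp only [mem_preimage, mem_Ioc]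
  constructor <;> rintro ⟨h₁, h₂⟩ <;> constructor <;> linarith
  rfl

lemma integral_lmTranslate (ρ : Measure ℝ) (p : ℝ) (f : ℝ → ℝ) :
    ∫ x, f x ∂lmTranslate ρ p = ∫ x, f (x - p) ∂ρ :=
  (MeasurableEquiv.subRight p).measurableEmbedding.integral_map f

def periodize (σ : Measure ℝ) (p : ℝ) : Measure ℝ :=
  Measure.sum fun k : ℤ => σ.map (· + k * p)

lemma periodize_apply {s : Set ℝ} (hs : MeasurableSet s) :
    periodize σ p s = ∑' k : ℤ, σ ((· + k * p) ⁻¹' s) := by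
  rw [periodize, Measure.sum_apply _ hs]
  exact tsum_congr fun k => Measure.map_apply (measurable_add_const _) hs

lemma periodize_add (σ₁ σ₂ : Measure ℝ) (p : ℝ) :
    periodize (σ₁ + σ₂) p = periodize σ₁ p + periodize σ₂ p := by
  simp only [periodize, Measure.map_add _ _ (measurable_add_const _), Measure.sum_add_sum]

lemma map_sub_periodize (σ : Measure ℝ) (p : ℝ) :
    (periodize σ p).map (· - p) = periodize σ p := by
  rw [periodize, Measure.map_sum (measurable_sub_const p).aemeasurable]
  have h : ∀ k : ℤ, (σ.map (· + k * p)).map (· - p) = σ.map (· + ((k - 1 : ℤ) : ℝ) * p) := by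
    intro k
    rw [Measure.map_map (measurable_sub_const p) (measurable_add_const _)]
    congr 1
    funext x
    simp only [Function.comp_apply, Int.cast_sub, Int.cast_one]
    ring
  simp only [h]
  exact Measure.sum_comp_equiv (Equiv.subRight 1) fun k : ℤ => σ.map (· + k * p)

lemma periodize_preimage_sub (σ : Measure ℝ) (p : ℝ) (B : Set ℝ) :
    periodize σ p ((· - p) ⁻¹' B) = periodize σ p B := by
  conv_rhs => rw [← map_sub_periodize σ p]
  exact ((MeasurableEquiv.subRight p).measurableEmbedding.map_apply _ B).symm

lemma integral_periodize {f : ℝ → ℝ} (hf : Integrable f (periodize σ p)) :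
    ∫ x, f x ∂periodize σ p = ∑' k : ℤ, ∫ x, f (x + k * p) ∂σ := by
  rw [periodize, integral_sum_measure hf]
  exact tsum_congr fun k => (MeasurableEquiv.addRight _).measurableEmbedding.integral_map f

/-- A unit interval meets fewer than `(b - a + 1) / p + 1` translates of `(a, b)` by `ℤ p`. -/
lemma periodize_Ioc_le {a b : ℝ} (hab : a ≤ b) (hσ : σ (Ioo a b)ᶜ = 0) (hp : 0 < p) (t : ℝ) :
    periodize σ p (Ioc t (t + 1)) ≤ ENNReal.ofReal ((b - a + 1) / p + 1) * unifE σ := by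
  set K := Finset.Ioo ⌊(t - b) / p⌋ ⌈(t + 1 - a) / p⌉
  have hzero : ∀ k ∉ K, σ ((· + k * p) ⁻¹' Ioc t (t + 1)) = 0 := by
    intro k hk
    refine measure_mono_null (fun x hx => ?_) hσ
    simp only [K, Finset.mem_Ioo, not_and_or, not_lt, Int.le_floor, Int.ceil_le] at hk
    rw [preimage_add_const_Ioc] at hx
    rintro ⟨h₁, h₂⟩
    rcases hk with hk | hk
    · linarith [hx.1, (le_div_iff₀ hp).1 hk]
    · linarith [hx.2, (div_le_iff₀ hp).1 hk]
  have hunit : ∀ k : ℤ, σ ((· + k * p) ⁻¹' Ioc t (t + 1)) ≤ unifE σ := fun k => by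
    rw [preimage_add_const_Ioc, show t + 1 - k * p = t - k * p + 1 by ring]
    exact le_iSup (fun s => σ (Ioc s (s + 1))) _
  have hcard : (K.card : ℝ) ≤ (b - a + 1) / p + 1 := by
    have hK : ((K.card : ℤ) : ℝ) = max ((⌈(t + 1 - a) / p⌉ - ⌊(t - b) / p⌋ - 1 : ℤ) : ℝ) 0 := by
      rw [Int.card_Ioo, Int.toNat_eq_max]; push_cast; rfl
    rw [Int.cast_natCast] at hK
    rw [hK]
    refine max_le ?_ (by positivity)
    have h₁ := Int.ceil_lt_add_one ((t + 1 - a) / p)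
    have h₂ := Int.sub_one_lt_floor ((t - b) / p)
    have h₃ : (t + 1 - a) / p - (t - b) / p = (b - a + 1) / p := by ring
    push_cast
    linarith
  rw [periodize_apply measurableSet_Ioc, tsum_eq_sum hzero]
  calc ∑ k ∈ K, σ ((· + k * p) ⁻¹' Ioc t (t + 1)) ≤ K.card • unifE σ :=
        Finset.sum_le_card_nsmul _ _ _ fun k _ => hunit k
    _ ≤ ENNReal.ofReal ((b - a + 1) / p + 1) * unifE σ := by
        rw [nsmul_eq_mul, ← ENNReal.ofReal_natCast]
        gcongr

lemma unifE_periodize_le {a b : ℝ} (hab : a ≤ b) (hσ : σ (Ioo a b)ᶜ = 0) (hp : 0 < p) :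
    unifE (periodize σ p) ≤ ENNReal.ofReal ((b - a + 1) / p + 1) * unifE σ :=
  iSup_le (periodize_Ioc_le hab hσ hp)

end Periodize

section Approximant

variable {ρ : Measure ℝ} {p β : ℝ}

def periodicApprox (ρ : Measure ℝ) (p β : ℝ) : Measure ℝ :=
  periodize (ρ.withDensity fun x => ENNReal.ofReal (bump p β x)) p

lemma withDensity_bump_compl_Ioo (hp : 0 ≤ p) (hβ : 0 < β) :
    ρ.withDensity (fun x => ENNReal.ofReal (bump p β x)) (Ioo 0 (p + β))ᶜ = 0 := by
  rw [withDensity_apply _ measurableSet_Ioo.compl]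
  refine (setLIntegral_congr_fun measurableSet_Ioo.compl fun x hx => ?_).trans lintegral_zero
  rw [not_imp_comm.1 (mem_Ioo_of_bump_ne_zero hp hβ) hx, ENNReal.ofReal_zero]

lemma withDensity_bump_le (ρ : Measure ℝ) (p β : ℝ) :
    ρ.withDensity (fun x => ENNReal.ofReal (bump p β x)) ≤ ρ := by
  refine Measure.le_iff.2 fun s hs => ?_
  rw [withDensity_apply _ hs, ← setLIntegral_one]
  exact lintegral_mono fun x => ENNReal.ofReal_le_one.2 (bump_le_one x)

lemma integral_withDensity_bump (hp : 0 ≤ p) (hβ : 0 ≤ β) (f : ℝ → ℝ) :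
    ∫ x, f x ∂ρ.withDensity (fun x => ENNReal.ofReal (bump p β x)) = ∫ x, bump p β x * f x ∂ρ := by
  rw [integral_withDensity_eq_integral_toReal_smul (by fun_prop)
    (ae_of_all _ fun _ => ENNReal.ofReal_lt_top)]
  simp only [ENNReal.toReal_ofReal (bump_nonneg hp hβ _), smul_eq_mul]

lemma unifE_periodicApprox_le (hp : 0 < p) (hβ : 0 < β) :
    unifE (periodicApprox ρ p β) ≤ ENNReal.ofReal ((p + β + 1) / p + 1) * unifE ρ := by
  have h := unifE_periodize_le (by linarith) (withDensity_bump_compl_Ioo (ρ := ρ) hp.le hβ) hp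
  rw [sub_zero] at h
  exact h.trans (by gcongr; exact unifE_mono (withDensity_bump_le ρ p β))

lemma periodicApprox_add (ρ₁ ρ₂ : Measure ℝ) (p β : ℝ) :
    periodicApprox (ρ₁ + ρ₂) p β = periodicApprox ρ₁ p β + periodicApprox ρ₂ p β := by
  rw [periodicApprox, withDensity_add_measure, periodize_add]
  rfl

lemma restrict_Icc_periodicApprox (hβ : 0 < β) (hβp : β ≤ p) :
    (periodicApprox ρ p β).restrict (Icc β p) = ρ.restrict (Icc β p) := by
  have hp : 0 < p := hβ.trans_le hβp
  ext s hs
  have hX : MeasurableSet (s ∩ Icc β p) := hs.inter measurableSet_Icc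
  rw [Measure.restrict_apply hs, Measure.restrict_apply hs, periodicApprox, periodize_apply hX,
    tsum_eq_single 0]
  · simp only [Int.cast_zero, zero_mul, add_zero, preimage_id']
    rw [withDensity_apply _ hX, setLIntegral_congr_fun hX fun x hx => by
      rw [bump_eq_one hβ hx.2.1 hx.2.2, ENNReal.ofReal_one], setLIntegral_one]
  · intro k hk
    have hXk : MeasurableSet ((· + k * p) ⁻¹' (s ∩ Icc β p)) :=
      hX.preimage (measurable_add_const _)
    rw [withDensity_apply _ hXk]
    refine (setLIntegral_congr_fun hXk fun x hx => ?_).trans lintegral_zero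
    obtain ⟨-, h₁, h₂⟩ := hx
    rw [ENNReal.ofReal_eq_zero]
    rcases lt_or_gt_of_ne hk with hk | hk
    · have : (k : ℝ) ≤ -1 := by exact_mod_cast (show k ≤ -1 by omega)
      exact (bump_of_ge hp.le hβ (by nlinarith)).le
    · have : (1 : ℝ) ≤ k := by exact_mod_cast hk
      exact (bump_of_nonpos hp.le hβ.le (by nlinarith)).le

lemma periodicApprox_apply_of_subset (hβ : 0 < β) (hβp : β ≤ p) {B : Set ℝ} (hB : B ⊆ Icc β p) :
    periodicApprox ρ p β B = ρ B := by
  rw [← Measure.restrict_eq_self _ hB, restrict_Icc_periodicApprox hβ hβp,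
    Measure.restrict_eq_self _ hB]

end Approximant

section Integrals

variable {ρ : Measure ℝ} {p β : ℝ} {w : ℝ → ℝ}

lemma integral_eq_sum_bump [IsFiniteMeasureOnCompacts ρ] (hβ : 0 < β) (hβp : β ≤ p)
    (hw : Continuous w) (hcs : HasCompactSupport w)
    (hsupp : Function.support w ⊆ Icc (-p) (2 * p)) :
    ∫ x, w x ∂ρ = ∫ x, bump p β (x + 2 * p) * w x ∂ρ + ∫ x, bump p β (x + p) * w x ∂ρ
      + ∫ x, bump p β x * w x ∂ρ + ∫ x, bump p β (x - p) * w x ∂ρ := by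
  have hint : ∀ c, Integrable (fun x => bump p β (x + c) * w x) ρ := fun c =>
    (by fun_prop : Continuous _).integrable_of_hasCompactSupport hcs.mul_left
  have h₀ := hint 0
  have h₁ := hint (-p)
  simp only [add_zero, ← sub_eq_add_neg] at h₀ h₁
  have h₂₁ : Integrable (fun x => bump p β (x + 2 * p) * w x + bump p β (x + p) * w x) ρ :=
    (hint _).add (hint _)
  have h₂₁₀ : Integrable (fun x => bump p β (x + 2 * p) * w x + bump p β (x + p) * w x
      + bump p β x * w x) ρ := h₂₁.add h₀
  rw [← integral_add (hint _) (hint _), ← integral_add h₂₁ h₀, ← integral_add h₂₁₀ h₁]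
  congr 1
  funext x
  by_cases hx : w x = 0
  · simp [hx]
  · rw [← add_mul, ← add_mul, ← add_mul, bump_add_bump_add_bump_add_bump hβ hβp (hsupp hx),
      one_mul]

lemma integral_periodicApprox (hp : 0 < p) (hβ : 0 < β) (hβp : β ≤ p)
    (hw : Integrable w (periodicApprox ρ p β)) (hsupp : Function.support w ⊆ Icc (-p) (2 * p)) :
    ∫ x, w x ∂periodicApprox ρ p β = ∫ x, bump p β x * w (x - 2 * p) ∂ρ
      + ∫ x, bump p β x * w (x - p) ∂ρ + ∫ x, bump p β x * w x ∂ρ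
      + ∫ x, bump p β x * w (x + p) ∂ρ := by
  rw [periodicApprox, integral_periodize hw, tsum_eq_sum (s := {-2, -1, 0, 1})]
  · simp only [integral_withDensity_bump hp.le hβ.le]
    rw [Finset.sum_insert (by decide), Finset.sum_insert (by decide), Finset.sum_insert (by decide),
      Finset.sum_singleton]
    push_cast
    simp only [neg_mul, one_mul, zero_mul, add_zero, ← sub_eq_add_neg, add_assoc]
  · intro k hk
    rw [integral_withDensity_bump hp.le hβ.le]
    refine integral_eq_zero_of_ae (ae_of_all _ fun x => ?_)
    by_contra hx
    obtain ⟨hb, hwx⟩ := mul_ne_zero_iff.1 hx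
    have h₁ := mem_Ioo_of_bump_ne_zero hp.le hβ hb
    have h₂ := hsupp hwx
    simp only [Finset.mem_insert, Finset.mem_singleton, not_or] at hk
    rcases lt_or_gt_of_ne hk.1 with hk' | hk'
    · have : (k : ℝ) ≤ -3 := by exact_mod_cast (show k ≤ -3 by omega)
      nlinarith [h₁.2, h₂.1]
    · have : (2 : ℝ) ≤ k := by exact_mod_cast (show 2 ≤ k by omega)
      nlinarith [h₁.1, h₂.2]

lemma integral_sub_integral_periodicApprox [IsFiniteMeasureOnCompacts ρ] (hp : 0 < p) (hβ : 0 < β)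
    (hβp : β ≤ p) (hw : Continuous w) (hcs : HasCompactSupport w)
    (hwp : Integrable w (periodicApprox ρ p β)) (hsupp : Function.support w ⊆ Icc (-p) (2 * p)) :
    ∫ x, w x ∂ρ - ∫ x, w x ∂periodicApprox ρ p β =
      (∫ x, w x * bump p β (x + 2 * p) ∂ρ - ∫ x, w x * bump p β (x + 2 * p) ∂lmTranslate ρ p)
      + (∫ x, w (x - p) * bump p β (x + p) ∂ρ
          - ∫ x, w (x - p) * bump p β (x + p) ∂lmTranslate ρ p)
      + (∫ x, w x * bump p β (x + p) ∂ρ - ∫ x, w x * bump p β (x + p) ∂lmTranslate ρ p)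
      - (∫ x, w (x + p) * bump p β x ∂ρ - ∫ x, w (x + p) * bump p β x ∂lmTranslate ρ p) := by
  rw [integral_eq_sum_bump hβ hβp hw hcs hsupp, integral_periodicApprox hp hβ hβp hwp hsupp]
  have hshift : ∀ x : ℝ, x - p + 2 * p = x + p := fun x => by ring
  simp only [integral_lmTranslate, mul_comm (w _), hshift, sub_sub, ← two_mul, sub_add_cancel]
  ring

end Integrals

section TestFunctions

variable {μp μm νp νm : Measure ℝ}

lemma _root_.LipschitzWith.mul_of_abs_le {f g : ℝ → ℝ} {Kf Kg Mf Mg : ℝ≥0}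
    (hf : LipschitzWith Kf f) (hg : LipschitzWith Kg g) (hfM : ∀ x, |f x| ≤ Mf)
    (hgM : ∀ x, |g x| ≤ Mg) : LipschitzWith (Mf * Kg + Kf * Mg) fun x => f x * g x := by
  refine LipschitzWith.of_dist_le_mul fun x y => ?_
  have hf' := hf.dist_le_mul x y
  have hg' := hg.dist_le_mul x y
  rw [Real.dist_eq] at hf' hg' ⊢
  push_cast
  calc |f x * g x - f y * g y| = |f x * (g x - g y) + (f x - f y) * g y| := by ring_nf
    _ ≤ |f x| * |g x - g y| + |f x - f y| * |g y| := by
        rw [← abs_mul, ← abs_mul]; exact abs_add_le _ _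
    _ ≤ Mf * (Kg * dist x y) + Kf * dist x y * Mg := by
        gcongr
        exacts [hfM x, hgM y]
    _ = (Mf * Kg + Kf * Mg) * dist x y := by ring

lemma abs_le_three_of_support_subset {w : ℝ → ℝ} (hw : LipschitzWith 1 w) {c : ℝ}
    (hc : Function.support w ⊆ Icc c (c + 2)) (x : ℝ) : |w x| ≤ 3 := by
  by_cases hx : w x = 0
  · simp [hx]
  have hx' := hc hx
  have h₀ : w (c - 1) = 0 := by
    by_contra h
    linarith [(hc h).1]
  have h := hw.dist_le_mul x (c - 1)
  rw [Real.dist_eq, Real.dist_eq, h₀, sub_zero, NNReal.coe_one, one_mul,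
    abs_of_nonneg (show (0 : ℝ) ≤ x - (c - 1) by linarith [hx'.1])] at h
  linarith [hx'.2]

lemma exists_tsupport_subset_Icc {w : ℝ → ℝ} (hcs : HasCompactSupport w)
    (hd : Metric.diam (tsupport w) ≤ 2) : ∃ c, tsupport w ⊆ Icc c (c + 2) := by
  rcases (tsupport w).eq_empty_or_nonempty with h | hne
  · exact ⟨0, h ▸ empty_subset _⟩
  refine ⟨sInf (tsupport w), fun x hx => ⟨csInf_le hcs.isBounded.bddBelow hx, ?_⟩⟩
  have := le_csSup hcs.isBounded.bddAbove hx
  rw [Real.diam_eq hcs.isBounded] at hd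
  linarith

lemma abs_integral_le_of_support_subset {ρ : Measure ℝ} [IsFiniteMeasureOnCompacts ρ]
    {w : ℝ → ℝ} {M a b : ℝ} (hM : ∀ x, |w x| ≤ M) (hs : Function.support w ⊆ Icc a b) :
    |∫ x, w x ∂ρ| ≤ M * ρ.real (Icc a b) := by
  rw [← setIntegral_eq_integral_of_forall_compl_eq_zero fun x hx => by_contra fun h => hx (hs h)]
  exact norm_setIntegral_le_of_norm_le_const (f := w) (C := M) isCompact_Icc.measure_lt_top
    fun x _ => hM x

lemma bddAbove_wNorm [IsFiniteMeasureOnCompacts μp] [IsFiniteMeasureOnCompacts μm]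
    [IsFiniteMeasureOnCompacts νp] [IsFiniteMeasureOnCompacts νm] (a b : ℝ) :
    BddAbove {r : ℝ | ∃ w : ℝ → ℝ, LipschitzWith 1 w ∧ HasCompactSupport w ∧
      tsupport w ⊆ Icc a b ∧ Metric.diam (tsupport w) ≤ 2 ∧
      r = |lmInt μp μm w - lmInt νp νm w|} := by
  refine ⟨3 * (μp.real (Icc a b) + μm.real (Icc a b) + νp.real (Icc a b) + νm.real (Icc a b)), ?_⟩
  rintro r ⟨w, hw, hcs, hab, hd, rfl⟩
  obtain ⟨c, hc⟩ := exists_tsupport_subset_Icc hcs hd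
  have h3 := abs_le_three_of_support_subset hw ((subset_tsupport w).trans hc)
  have hs := (subset_tsupport w).trans hab
  have h₁ := abs_le.1 (abs_integral_le_of_support_subset (ρ := μp) h3 hs)
  have h₂ := abs_le.1 (abs_integral_le_of_support_subset (ρ := μm) h3 hs)
  have h₃ := abs_le.1 (abs_integral_le_of_support_subset (ρ := νp) h3 hs)
  have h₄ := abs_le.1 (abs_integral_le_of_support_subset (ρ := νm) h3 hs)
  rw [lmInt, lmInt, abs_le]
  constructor <;> linarith

/-- Rescaling turns a `K`-Lipschitz test function into an admissible one for `wNorm`. -/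
lemma abs_lmInt_sub_le_mul_wNorm [IsFiniteMeasureOnCompacts μp] [IsFiniteMeasureOnCompacts μm]
    [IsFiniteMeasureOnCompacts νp] [IsFiniteMeasureOnCompacts νm] {v : ℝ → ℝ} {K : ℝ≥0}
    (hK : 0 < K) (hv : LipschitzWith K v) {a b c : ℝ} (hc : Function.support v ⊆ Icc c (c + 2))
    (hab : Function.support v ⊆ Icc a b) :
    |lmInt μp μm v - lmInt νp νm v| ≤ K * wNorm μp μm νp νm (Icc a b) := by
  have hK' : (0 : ℝ) < K := hK
  set u : ℝ → ℝ := fun x => (K : ℝ)⁻¹ * v x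
  have hu : LipschitzWith 1 u := by
    refine LipschitzWith.of_dist_le_mul fun x y => ?_
    have h := hv.dist_le_mul x y
    rw [Real.dist_eq] at h ⊢
    rw [← mul_sub, abs_mul, abs_inv, abs_of_pos hK', NNReal.coe_one, one_mul, inv_mul_le_iff₀ hK']
    exact h
  have hsupp : Function.support u = Function.support v :=
    Function.support_const_smul_of_ne_zero _ _ (inv_ne_zero hK'.ne')
  have hts : tsupport u ⊆ Icc c (c + 2) ∩ Icc a b :=
    closure_minimal (hsupp ▸ subset_inter hc hab) (isClosed_Icc.inter isClosed_Icc)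
  have hmem := le_csSup (bddAbove_wNorm (μp := μp) (μm := μm) (νp := νp) (νm := νm) a b)
    ⟨u, hu, (isCompact_Icc.inter_right isClosed_Icc).of_isClosed_subset isClosed_closure hts,
      hts.trans inter_subset_right,
      (Metric.diam_mono (hts.trans inter_subset_left) (Metric.isBounded_Icc _ _)).trans
        (by rw [Real.diam_Icc (by linarith)]; linarith), rfl⟩
  have hscale : lmInt μp μm u - lmInt νp νm u = (K : ℝ)⁻¹ * (lmInt μp μm v - lmInt νp νm v) := by
    simp only [u, lmInt, integral_const_mul]
    ring
  rw [hscale, abs_mul, abs_inv, abs_of_pos hK', inv_mul_le_iff₀ hK'] at hmem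
  exact hmem

end TestFunctions

section Estimate

variable {μp μm : Measure ℝ} {p β : ℝ}

/-- `∫ v dμ - ∫ v dμ(· + p)`, the quantity controlled by the Gordon condition. -/
def shiftDefect (μp μm : Measure ℝ) (p : ℝ) (v : ℝ → ℝ) : ℝ :=
  lmInt μp μm v - lmInt (lmTranslate μp p) (lmTranslate μm p) v

lemma unifE_periodicApprox_lt_top {ρ : Measure ℝ} (hρ : unifE ρ < ⊤) (hp : 0 < p) (hβ : 0 < β) :
    unifE (periodicApprox ρ p β) < ⊤ :=
  (unifE_periodicApprox_le hp hβ).trans_lt (ENNReal.mul_lt_top ENNReal.ofReal_lt_top hρ)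

lemma lmInt_sub_lmInt_periodicApprox (hμp : unifE μp < ⊤) (hμm : unifE μm < ⊤) (hβ : 0 < β)
    (hβp : β ≤ p) {w : ℝ → ℝ} (hw : Continuous w) (hcs : HasCompactSupport w)
    (hsupp : Function.support w ⊆ Icc (-p) (2 * p)) :
    lmInt μp μm w - lmInt (periodicApprox μp p β) (periodicApprox μm p β) w =
      shiftDefect μp μm p (fun x => w x * bump p β (x + 2 * p))
      + shiftDefect μp μm p (fun x => w (x - p) * bump p β (x + p))
      + shiftDefect μp μm p (fun x => w x * bump p β (x + p))
      - shiftDefect μp μm p (fun x => w (x + p) * bump p β x) := by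
  have hp := hβ.trans_le hβp
  have := isLocallyFiniteMeasure_of_unifE_lt_top hμp
  have := isLocallyFiniteMeasure_of_unifE_lt_top hμm
  have := isLocallyFiniteMeasure_of_unifE_lt_top (unifE_periodicApprox_lt_top hμp hp hβ)
  have := isLocallyFiniteMeasure_of_unifE_lt_top (unifE_periodicApprox_lt_top hμm hp hβ)
  have hp' := integral_sub_integral_periodicApprox (ρ := μp) hp hβ hβp hw hcs
    (hw.integrable_of_hasCompactSupport hcs) hsupp
  have hm' := integral_sub_integral_periodicApprox (ρ := μm) hp hβ hβp hw hcs
    (hw.integrable_of_hasCompactSupport hcs) hsupp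
  simp only [shiftDefect, lmInt]
  linarith

lemma abs_shiftDefect_mul_le [IsFiniteMeasureOnCompacts μp] [IsFiniteMeasureOnCompacts μm]
    [IsFiniteMeasureOnCompacts (lmTranslate μp p)] [IsFiniteMeasureOnCompacts (lmTranslate μm p)]
    (hβ : 0 < β) {u g : ℝ → ℝ} (hu : LipschitzWith 1 u) {c : ℝ}
    (hc : Function.support u ⊆ Icc c (c + 2)) (hg : LipschitzWith (2 * β⁻¹.toNNReal) g)
    (hg₁ : ∀ x, |g x| ≤ 1) (hsupp : ∀ x, u x ≠ 0 → g x ≠ 0 → x ∈ Icc (-p) p) :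
    |shiftDefect μp μm p (fun x => u x * g x)|
      ≤ (1 + 6 / β) * wNorm μp μm (lmTranslate μp p) (lmTranslate μm p) (Icc (-p) p) := by
  have hv := hu.mul_of_abs_le hg (Mf := 3) (Mg := 1)
    (fun x => by exact_mod_cast abs_le_three_of_support_subset hu hc x)
    (fun x => by exact_mod_cast hg₁ x)
  have hK : ((3 * (2 * β⁻¹.toNNReal) + 1 * 1 : ℝ≥0) : ℝ) = 1 + 6 / β := by
    push_cast [Real.coe_toNNReal _ (inv_nonneg.2 hβ.le)]
    ring
  rw [← hK]
  exact abs_lmInt_sub_le_mul_wNorm (by positivity) hv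
    ((Function.support_mul_subset_left _ _).trans hc)
    fun x hx => hsupp x (left_ne_zero_of_mul hx) (right_ne_zero_of_mul hx)

lemma wNorm_nonneg (μp μm νp νm : Measure ℝ) (I : Set ℝ) : 0 ≤ wNorm μp μm νp νm I :=
  Real.sSup_nonneg fun _ ⟨_, _, _, _, _, hr⟩ => hr ▸ abs_nonneg _

theorem wNorm_periodicApprox_le (hμp : unifE μp < ⊤) (hμm : unifE μm < ⊤) (hβ : 0 < β)
    (hβp : β ≤ p) :
    wNorm μp μm (periodicApprox μp p β) (periodicApprox μm p β) (Icc (-p) (2 * p))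
      ≤ 4 * (1 + 6 / β) * wNorm μp μm (lmTranslate μp p) (lmTranslate μm p) (Icc (-p) p) := by
  have hp := hβ.trans_le hβp
  have := isLocallyFiniteMeasure_of_unifE_lt_top hμp
  have := isLocallyFiniteMeasure_of_unifE_lt_top hμm
  have := isLocallyFiniteMeasure_of_unifE_lt_top ((unifE_lmTranslate_le μp p).trans_lt hμp)
  have := isLocallyFiniteMeasure_of_unifE_lt_top ((unifE_lmTranslate_le μm p).trans_lt hμm)
  have hW := wNorm_nonneg μp μm (lmTranslate μp p) (lmTranslate μm p) (Icc (-p) p)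
  refine Real.sSup_le ?_ (by positivity)
  rintro r ⟨w, hw, hcs, hsub, hd, rfl⟩
  obtain ⟨c, hc⟩ := exists_tsupport_subset_Icc hcs hd
  have hwc := (subset_tsupport w).trans hc
  have hwp := (subset_tsupport w).trans hsub
  have hb := lipschitzWith_bump hβ p
  have hb₁ := abs_bump_le_one hp.le hβ.le
  have hwm : LipschitzWith 1 fun x => w (x - p) := by
    simpa only [← sub_eq_add_neg] using hw.comp_add_const (-p)
  have hwm' : Function.support (fun x => w (x - p)) ⊆ Icc (c + p) (c + p + 2) := fun x hx =>
    ⟨by linarith [(hwc hx).1], by linarith [(hwc hx).2]⟩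
  have hwp' : Function.support (fun x => w (x + p)) ⊆ Icc (c - p) (c - p + 2) := fun x hx =>
    ⟨by linarith [(hwc hx).1], by linarith [(hwc hx).2]⟩
  have hbnd := fun {u g : ℝ → ℝ} => abs_shiftDefect_mul_le (μp := μp) (μm := μm) (p := p) hβ
    (u := u) (g := g)
  have hbump : ∀ {y}, bump p β y ≠ 0 → y ∈ Ioo 0 (p + β) := mem_Ioo_of_bump_ne_zero hp.le hβ
  have h₁ := hbnd hw hwc (hb.comp_add_const (2 * p)) (fun _ => hb₁ _) fun x h₁ h₂ => by
    constructor <;> linarith [(hwp h₁).1, (hbump h₂).2]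
  have h₂ := hbnd hwm hwm' (hb.comp_add_const p) (fun _ => hb₁ _) fun x h₁ h₂ => by
    constructor <;> linarith [(hwp h₁).1, (hbump h₂).2]
  have h₃ := hbnd hw hwc (hb.comp_add_const p) (fun _ => hb₁ _) fun x h₁ h₂ => by
    constructor <;> linarith [(hwp h₁).1, (hbump h₂).2]
  have h₄ := hbnd (hw.comp_add_const p) hwp' hb hb₁ fun x h₁ h₂ => by
    constructor <;> linarith [(hwp h₁).2, (hbump h₂).1]
  rw [lmInt_sub_lmInt_periodicApprox hμp hμm hβ hβp hw.continuous hcs hwp]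
  rw [abs_le] at h₁ h₂ h₃ h₄ ⊢
  constructor <;> linarith [h₁.1, h₁.2, h₂.1, h₂.2, h₃.1, h₃.2, h₄.1, h₄.2]

end Estimate


lemma unifE_add_periodicApprox_le {μp μm : Measure ℝ} {p β : ℝ} (hunif : unifE (μp + μm) < ⊤)
    (hβ : 0 < β) (hβ₁ : β ≤ 8⁻¹) (hβp : 8 * β ≤ p) :
    unifE (periodicApprox μp p β + periodicApprox μm p β)
      ≤ ENNReal.ofReal ((1 + 1 / (2 * β)) * unifNorm (μp + μm)) := by
  have hp : 0 < p := by linarith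
  rw [← periodicApprox_add, ENNReal.ofReal_mul (by positivity), unifNorm,
    ENNReal.ofReal_toReal hunif.ne]
  refine (unifE_periodicApprox_le hp hβ).trans ?_
  gcongr ENNReal.ofReal ?_ * _
  have h₁ : (β + 1) / p ≤ (β + 1) / (8 * β) := by gcongr
  have h₂ : (β + 1) / (8 * β) + 9 / 8 ≤ 1 / (2 * β) := by
    rw [div_add_div _ _ (by positivity) (by norm_num),
      div_le_div_iff₀ (by positivity) (by positivity)]
    nlinarith
  rw [add_assoc, add_div, div_self hp.ne']
  linarith

lemma exists_pos_le_of_tendsto_atTop {u : ℕ → ℝ} (hpos : ∀ m, 0 < u m)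
    (hu : Tendsto u atTop atTop) : ∃ ε, 0 < ε ∧ ∀ m, ε ≤ u m := by
  obtain ⟨m₀, hm₀⟩ := (Nat.cofinite_eq_atTop ▸ hu).exists_forall_le
  exact ⟨u m₀, hpos m₀, hm₀⟩

lemma tendsto_wNorm_periodicApprox {μp μm : Measure ℝ} (hμp : unifE μp < ⊤)
    (hμm : unifE μm < ⊤) {C ε : ℝ} {pm β : ℕ → ℝ} (hε : 0 < ε) (hβ : ∀ m, ε ≤ β m)
    (hβp : ∀ m, β m ≤ pm m)
    (hGordon : Tendsto (fun m => Real.exp (C * pm m) *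
      wNorm μp μm (lmTranslate μp (pm m)) (lmTranslate μm (pm m)) (Icc (-pm m) (pm m)))
      atTop (nhds 0)) :
    Tendsto (fun m => Real.exp (C * pm m) * wNorm μp μm (periodicApprox μp (pm m) (β m))
      (periodicApprox μm (pm m) (β m)) (Icc (-pm m) (2 * pm m))) atTop (nhds 0) := by
  refine squeeze_zero (fun m => mul_nonneg (Real.exp_pos _).le (wNorm_nonneg _ _ _ _ _))
    (fun m => ?_) (by simpa using hGordon.const_mul (4 * (1 + 6 / ε)))
  have hβ₀ := hε.trans_le (hβ m)
  have hW := wNorm_nonneg μp μm (lmTranslate μp (pm m)) (lmTranslate μm (pm m)) (Icc (-pm m) (pm m))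
  calc _ ≤ Real.exp (C * pm m) * (4 * (1 + 6 / β m) *
          wNorm μp μm (lmTranslate μp (pm m)) (lmTranslate μm (pm m)) (Icc (-pm m) (pm m))) := by
        gcongr
        exact wNorm_periodicApprox_le hμp hμm hβ₀ (hβp m)
    _ ≤ _ := by
        rw [mul_left_comm]
        gcongr
        exact hβ m

end GordonPotential

open GordonPotential in
theorem periodic_approximation_of_gordon_potentials_general
    (μp μm : MeasureTheory.Measure ℝ)
    (hunif : unifE (μp + μm) < ⊤)
    (C : ℝ)
    (pm : ℕ → ℝ) (hpm_pos : ∀ m : ℕ, 0 < pm m) (hpm : Tendsto pm atTop atTop)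
    (hGordon : Tendsto (fun m : ℕ => Real.exp (C * pm m) *
        wNorm μp μm (lmTranslate μp (pm m)) (lmTranslate μm (pm m))
          (Set.Icc (-(pm m)) (pm m)))
      atTop (nhds 0)) :
    ∃ (νp νm : ℕ → MeasureTheory.Measure ℝ) (α : ℕ → ℝ),
      (∀ m : ℕ, FiniteOnBounded (νp m) ∧ FiniteOnBounded (νm m)) ∧
      (∀ m : ℕ, 0 < α m ∧ α m ≤ pm m / 2) ∧
      (∃ ε : ℝ, 0 < ε ∧ ∀ m : ℕ, ε ≤ α m) ∧
      (∀ m : ℕ, ∀ B : Set ℝ, Bornology.IsBounded B →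
        lmVal (νp m) (νm m) ((fun x => x - pm m) ⁻¹' B) = lmVal (νp m) (νm m) B) ∧
      Tendsto (fun m : ℕ => Real.exp (C * pm m) *
          wNorm μp μm (νp m) (νm m) (Set.Icc (-(pm m)) (2 * pm m))) atTop (nhds 0) ∧
      (∀ m : ℕ, ∀ B : Set ℝ, Bornology.IsBounded B → B ⊆ Set.Icc (α m) (pm m - α m) →
        lmVal (νp m) (νm m) B = lmVal μp μm B) ∧
      (∀ m : ℕ, unifE (νp m + νm m) ≤
        ENNReal.ofReal ((1 + 1 / (2 * α m)) * unifNorm (μp + μm))) := by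
  set α : ℕ → ℝ := fun m => min 8⁻¹ (pm m / 8)
  have hα : ∀ m, 0 < α m := fun m => lt_min (by norm_num) (by linarith [hpm_pos m])
  have hαp : ∀ m, 8 * α m ≤ pm m := fun m => by
    linarith [show α m ≤ pm m / 8 from min_le_right _ _]
  obtain ⟨ε, hε, hεp⟩ := exists_pos_le_of_tendsto_atTop hpm_pos hpm
  have hαε : ∀ m, min 8⁻¹ (ε / 8) ≤ α m := fun m => min_le_min le_rfl (by linarith [hεp m])
  have hμp := (unifE_mono (Measure.le_add_right le_rfl)).trans_lt hunif
  have hμm := (unifE_mono (Measure.le_add_left le_rfl)).trans_lt hunif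
  have hν := fun m => unifE_add_periodicApprox_le hunif (hα m) (min_le_left _ _) (hαp m)
  have hfin := fun m => (hν m).trans_lt ENNReal.ofReal_lt_top
  refine ⟨fun m => periodicApprox μp (pm m) (α m), fun m => periodicApprox μm (pm m) (α m), α,
    fun m => ⟨?_, ?_⟩, fun m => ⟨hα m, by linarith [hαp m, hα m]⟩,
    ⟨_, lt_min (by norm_num) (by positivity), hαε⟩, fun m B _ => ?_,
    tendsto_wNorm_periodicApprox hμp hμm (lt_min (by norm_num) (by positivity)) hαε
      (fun m => by linarith [hαp m, hα m]) hGordon, fun m B _ hB => ?_, hν⟩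
  · exact finiteOnBounded_of_unifE_lt_top
      ((unifE_mono (Measure.le_add_right le_rfl)).trans_lt (hfin m))
  · exact finiteOnBounded_of_unifE_lt_top
      ((unifE_mono (Measure.le_add_left le_rfl)).trans_lt (hfin m))
  · simp only [lmVal, periodicApprox, periodize_preimage_sub]
  · have hB' : B ⊆ Icc (α m) (pm m) := hB.trans (Icc_subset_Icc le_rfl (by linarith [hα m]))
    rw [lmVal, lmVal, periodicApprox_apply_of_subset (hα m) (by linarith [hαp m, hα m]) hB',
      periodicApprox_apply_of_subset (hα m) (by linarith [hαp m, hα m]) hB']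

/-- Periodic approximation of Gordon potentials. -/
theorem periodic_approximation_of_gordon_potentials
    (μp μm : MeasureTheory.Measure ℝ)
    (hfinp : FiniteOnBounded μp) (hfinm : FiniteOnBounded μm)
    (hunif : unifE (μp + μm) < ⊤)
    (C : ℝ) (hC : 0 < C)
    (pm : ℕ → ℝ) (hpm_pos : ∀ m : ℕ, 0 < pm m) (hpm : Tendsto pm atTop atTop)
    (hGordon : Tendsto (fun m : ℕ => Real.exp (C * pm m) *
        wNorm μp μm (lmTranslate μp (pm m)) (lmTranslate μm (pm m))
          (Set.Icc (-(pm m)) (pm m)))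
      atTop (nhds 0)) :
    ∃ (νp νm : ℕ → MeasureTheory.Measure ℝ) (α : ℕ → ℝ),
      (∀ m : ℕ, FiniteOnBounded (νp m) ∧ FiniteOnBounded (νm m)) ∧
      (∀ m : ℕ, 0 < α m ∧ α m ≤ pm m / 2) ∧
      (∃ ε : ℝ, 0 < ε ∧ ∀ m : ℕ, ε ≤ α m) ∧
      (∀ m : ℕ, ∀ B : Set ℝ, Bornology.IsBounded B →
        lmVal (νp m) (νm m) ((fun x => x - pm m) ⁻¹' B) = lmVal (νp m) (νm m) B) ∧
      Tendsto (fun m : ℕ => Real.exp (C * pm m) *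
          wNorm μp μm (νp m) (νm m) (Set.Icc (-(pm m)) (2 * pm m))) atTop (nhds 0) ∧
      (∀ m : ℕ, ∀ B : Set ℝ, Bornology.IsBounded B → B ⊆ Set.Icc (α m) (pm m - α m) →
        lmVal (νp m) (νm m) B = lmVal μp μm B) ∧
      (∀ m : ℕ, unifE (νp m + νm m) ≤
        ENNReal.ofReal ((1 + 1 / (2 * α m)) * unifNorm (μp + μm))) :=
  periodic_approximation_of_gordon_potentials_general μp μm hunif C pm hpm_pos hpm hGordon
end
end

section
/- Optimized growth bound for solutions: Let (a, μ) ∈ AM(ℝ) (with respect to some nonzero nonnegative periodic Borel measure ρ with ‖ρ‖_unif < ∞), let (u, v) be a solution of H_{a,μ} u = 0, and set ω := ( ‖μ‖_unif / ‖1/a‖_∞ )^{1/2}. Then for all t ∈ ℝ: ( ω²·u(t)² + v(t)² )^{1/2} ≤ ( ω²·u(0)² + v(0)² )^{1/2} · e^{ ω·‖1/a‖_∞·(|t| + 1/2) }. -/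
open MeasureTheory Set Filter

noncomputable section

/-!
Over a short step from `x` to `y`, the pair `(ω u, v)` changes by `ω u ↦ ω u + c₁ v` and
`v ↦ v + c₂ (ω u)` up to errors quadratic in the step, where `|c₁| ≤ ω ‖1/a‖_∞ |y - x|` and
`|c₂| ≤ |μ|((x, y]) / ω`. A shear by `c` stretches the Euclidean norm by at most `exp (|c| / 2)`,
because `|c| ≤ 2 sinh (|c| / 2)`. Chaining the steps over finer and finer partitions of the
segment from `0` to `t` gives
`(ω² u(t)² + v(t)²)^{1/2} ≤ exp ((ω ‖1/a‖_∞ |t| + |μ|((0, t]) / ω) / 2) (ω² u(0)² + v(0)²)^{1/2}`,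
and `|μ|((0, t]) ≤ ‖μ‖_unif (|t| + 1) = ω² ‖1/a‖_∞ (|t| + 1)` for the optimal `ω`.
-/

open Real intervalIntegral
open scoped Interval Topology

/-- With `z = exp (|c| / 2)`, this reduces to `|c| ≤ z - z⁻¹ = 2 sinh (|c| / 2)`. -/
theorem sq_add_mul_add_sq_le_exp (c x y : ℝ) :
    (x + c * y) ^ 2 + y ^ 2 ≤ exp |c| * (x ^ 2 + y ^ 2) := by
  set z := exp (|c| / 2)
  set w := exp (-(|c| / 2))
  have hzw : z * w = 1 := by rw [← exp_add, add_neg_cancel, exp_zero]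
  have hk : 0 ≤ z - w - |c| := by
    have := self_le_sinh_iff.2 (by positivity : 0 ≤ |c| / 2)
    rw [sinh_eq] at this
    linarith
  have hexp : exp |c| = z * z := by rw [← exp_add, add_halves]
  have hcxy : 2 * (c * x * y) ≤ |c| * (z * x ^ 2 + w * y ^ 2) := by
    have h₁ : c * x * y ≤ |c| * (|x| * |y|) := by
      rw [← abs_mul, ← abs_mul, ← mul_assoc]; exact le_abs_self _
    have h₂ : w * (z * |x| - |y|) ^ 2 = z * x ^ 2 - 2 * (|x| * |y|) + w * y ^ 2 := by
      have : w * (z * |x| - |y|) ^ 2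
          = z * w * z * |x| ^ 2 - 2 * (z * w) * (|x| * |y|) + w * |y| ^ 2 := by ring
      rw [this, hzw, sq_abs, sq_abs]; ring
    nlinarith [abs_nonneg c, (by positivity : 0 ≤ w * (z * |x| - |y|) ^ 2)]
  have hx : 0 ≤ z * (z - w - |c|) * (x ^ 2 + y ^ 2) := by positivity
  have hy : 0 ≤ |c| * (z - w - |c|) * y ^ 2 := by positivity
  have hlhs : (x + c * y) ^ 2 + y ^ 2
      = z * w * (x ^ 2 + y ^ 2) + 2 * (c * x * y) + |c| ^ 2 * y ^ 2 := by
    rw [hzw, sq_abs]; ring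
  rw [hexp, hlhs]
  nlinarith

theorem sqrt_add_mul_sq_add_sq_le (c x y : ℝ) :
    √((x + c * y) ^ 2 + y ^ 2) ≤ exp (|c| / 2) * √(x ^ 2 + y ^ 2) := by
  rw [exp_half, ← sqrt_mul (exp_pos _).le]
  exact sqrt_le_sqrt (sq_add_mul_add_sq_le_exp c x y)

theorem sqrt_add_sq_add_le (x₁ y₁ x₂ y₂ : ℝ) :
    √((x₁ + x₂) ^ 2 + (y₁ + y₂) ^ 2) ≤ √(x₁ ^ 2 + y₁ ^ 2) + √(x₂ ^ 2 + y₂ ^ 2) := by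
  have h := norm_add_le ((x₁ : ℂ) + y₁ * Complex.I) (x₂ + y₂ * Complex.I)
  rwa [show (x₁ : ℂ) + y₁ * Complex.I + (x₂ + y₂ * Complex.I) = ↑(x₁ + x₂) + ↑(y₁ + y₂) * Complex.I
    by push_cast; ring, Complex.norm_add_mul_I, Complex.norm_add_mul_I, Complex.norm_add_mul_I] at h

theorem sqrt_sq_add_sq_le (x y : ℝ) : √(x ^ 2 + y ^ 2) ≤ |x| + |y| := by
  simpa [← Complex.norm_add_mul_I] using Complex.norm_le_abs_re_add_abs_im (x + y * Complex.I)

/-- The linear part is the composition of two shears, up to the second-order term `c₁ c₂ y`. -/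
theorem sqrt_perturbed_shear_le (c₁ c₂ e₁ e₂ x y : ℝ) :
    √((x + c₁ * y + e₁) ^ 2 + (y + c₂ * x + e₂) ^ 2)
      ≤ exp ((|c₁| + |c₂|) / 2) * √(x ^ 2 + y ^ 2) + (|e₁| + |e₂| + |c₁ * c₂ * y|) := by
  set x' := x + c₁ * y
  have hshear₂ : √(x' ^ 2 + (y + c₂ * x') ^ 2) ≤ exp (|c₂| / 2) * √(x' ^ 2 + y ^ 2) := by
    simpa only [add_comm (x' ^ 2)] using sqrt_add_mul_sq_add_sq_le c₂ y x'
  have hshear₁ := sqrt_add_mul_sq_add_sq_le c₁ x y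
  have herr : √(e₁ ^ 2 + (e₂ - c₁ * c₂ * y) ^ 2) ≤ |e₁| + |e₂| + |c₁ * c₂ * y| :=
    (sqrt_sq_add_sq_le _ _).trans (by linarith [abs_sub e₂ (c₁ * c₂ * y)])
  have hsplit := sqrt_add_sq_add_le x' (y + c₂ * x') e₁ (e₂ - c₁ * c₂ * y)
  rw [show y + c₂ * x' + (e₂ - c₁ * c₂ * y) = y + c₂ * x + e₂ by ring] at hsplit
  calc _ ≤ √(x' ^ 2 + (y + c₂ * x') ^ 2) + √(e₁ ^ 2 + (e₂ - c₁ * c₂ * y) ^ 2) := hsplit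
    _ ≤ exp (|c₂| / 2) * (exp (|c₁| / 2) * √(x ^ 2 + y ^ 2)) + (|e₁| + |e₂| + |c₁ * c₂ * y|) :=
        add_le_add (hshear₂.trans (mul_le_mul_of_nonneg_left hshear₁ (exp_pos _).le)) herr
    _ = _ := by rw [← mul_assoc, ← exp_add]; ring_nf

instance {α : Type*} [MeasurableSpace α] [TopologicalSpace α] {μ ν : Measure α}
    [IsFiniteMeasureOnCompacts μ] [IsFiniteMeasureOnCompacts ν] :
    IsFiniteMeasureOnCompacts (μ + ν) :=
  ⟨fun _ hK => by
    simpa only [Measure.add_apply] using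
      ENNReal.add_lt_top.2 ⟨hK.measure_lt_top, hK.measure_lt_top⟩⟩

theorem FiniteOnBounded.isFiniteMeasureOnCompacts {ν : Measure ℝ} (h : FiniteOnBounded ν) :
    IsFiniteMeasureOnCompacts ν :=
  ⟨fun K hK => h K hK.isBounded⟩

theorem measureReal_uIoc_add_measureReal_uIoc (ν : Measure ℝ) [IsFiniteMeasureOnCompacts ν]
    {a b c : ℝ} (h : b ∈ [[a, c]]) : ν.real (Ι a b) + ν.real (Ι b c) = ν.real (Ι a c) := by
  have hdisj : Disjoint (Ι a b) (Ι b c) := by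
    rcases mem_uIcc.1 h with ⟨h₁, h₂⟩ | ⟨h₁, h₂⟩
    · rw [uIoc_of_le h₁, uIoc_of_le h₂]; exact Ioc_disjoint_Ioc_of_le le_rfl
    · rw [uIoc_of_ge h₁, uIoc_of_ge h₂]; exact (Ioc_disjoint_Ioc_of_le le_rfl).symm
  rw [← uIoc_union_uIoc h, measureReal_union hdisj measurableSet_uIoc
    (by exact measure_Ioc_lt_top.ne) (by exact measure_Ioc_lt_top.ne)]

theorem measure_Ioc_add_natCast_le_unifE (ν : Measure ℝ) (s : ℝ) (n : ℕ) :
    ν (Ioc s (s + n)) ≤ n * unifE ν := by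
  induction n with
  | zero => simp
  | succ n ih =>
    calc ν (Ioc s (s + ↑(n + 1))) = ν (Ioc s (s + n) ∪ Ioc (s + n) (s + n + 1)) := by
          rw [Ioc_union_Ioc_eq_Ioc (by simp) (by linarith)]; push_cast; ring_nf
      _ ≤ n * unifE ν + unifE ν := (measure_union_le _ _).trans
          (add_le_add ih (le_iSup (fun r => ν (Ioc r (r + 1))) _))
      _ = ↑(n + 1) * unifE ν := by push_cast; ring

theorem measureReal_uIoc_le_unifNorm {ν : Measure ℝ} (hν : unifE ν < ⊤) (s t : ℝ) :
    ν.real (Ι s t) ≤ unifNorm ν * (|t - s| + 1) := by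
  set n := ⌈|t - s|⌉₊
  have hle : ν (Ι s t) ≤ n * unifE ν := by
    refine (measure_mono (Ioc_subset_Ioc_right ?_)).trans (measure_Ioc_add_natCast_le_unifE ν _ n)
    linarith [max_sub_min_eq_abs s t, Nat.le_ceil |t - s|]
  have hn : (n : ℝ) ≤ |t - s| + 1 := (Nat.ceil_lt_add_one (abs_nonneg _)).le
  calc ν.real (Ι s t) ≤ (n * unifE ν).toReal :=
        ENNReal.toReal_mono (ENNReal.mul_ne_top (by simp) hν.ne) hle
    _ = n * unifNorm ν := by simp [unifNorm]
    _ ≤ _ := by rw [mul_comm]; exact mul_le_mul_of_nonneg_left hn ENNReal.toReal_nonneg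

section Gronwall

variable {R Φ : ℝ → ℝ} {C : ℝ}

theorem le_exp_mul_add_of_forall_le_exp_mul_add (hC : 0 ≤ C) (hΦ : MonotoneOn Φ (Icc 0 1))
    (hstep : ∀ x ∈ Icc (0 : ℝ) 1, ∀ y ∈ Icc (0 : ℝ) 1, x ≤ y →
      R y ≤ exp (Φ y - Φ x) * R x + C * (y - x) * (Φ y - Φ x)) {n : ℕ} (hn : 0 < n) :
    R 1 ≤ exp (Φ 1 - Φ 0) * (R 0 + C / n * (Φ 1 - Φ 0)) := by
  have hn' : (0 : ℝ) < n := Nat.cast_pos.2 hn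
  have hmem : ∀ k ≤ n, (k : ℝ) / n ∈ Icc (0 : ℝ) 1 := fun k hk =>
    ⟨by positivity, (div_le_one hn').2 (Nat.cast_le.2 hk)⟩
  have hk : ∀ k ≤ n,
      R (k / n) ≤ exp (Φ (k / n) - Φ 0) * (R 0 + C / n * (Φ (k / n) - Φ 0)) := by
    intro k
    induction k with
    | zero => simp
    | succ k ih =>
      intro hk
      have hlt : (k : ℝ) / n ≤ (k + 1 : ℕ) / n := by gcongr; simp
      have ha : 0 ≤ Φ (k / n) - Φ 0 :=
        sub_nonneg.2 (hΦ ⟨le_rfl, zero_le_one⟩ (hmem k (by omega)) (hmem k (by omega)).1)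
      have hb : 0 ≤ Φ ((k + 1 : ℕ) / n) - Φ (k / n) :=
        sub_nonneg.2 (hΦ (hmem k (by omega)) (hmem (k + 1) hk) hlt)
      have hexp : 1 ≤ exp (Φ ((k + 1 : ℕ) / n) - Φ 0) := one_le_exp (by linarith)
      have hstep' := hstep _ (hmem k (by omega)) _ (hmem (k + 1) hk) hlt
      rw [show ((k + 1 : ℕ) : ℝ) / n - k / n = 1 / n by push_cast; ring, mul_one_div] at hstep'
      calc R ((k + 1 : ℕ) / n)
          ≤ exp (Φ ((k + 1 : ℕ) / n) - Φ (k / n))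
              * (exp (Φ (k / n) - Φ 0) * (R 0 + C / n * (Φ (k / n) - Φ 0)))
            + C / n * (Φ ((k + 1 : ℕ) / n) - Φ (k / n)) :=
            hstep'.trans (by gcongr; exact ih (by omega))
        _ ≤ exp (Φ ((k + 1 : ℕ) / n) - Φ 0) * (R 0 + C / n * (Φ ((k + 1 : ℕ) / n) - Φ 0)) := by
            rw [← mul_assoc, ← exp_add, sub_add_sub_cancel]
            have : 0 ≤ C / n * (Φ ((k + 1 : ℕ) / n) - Φ (k / n)) := by positivity
            nlinarith [mul_le_mul_of_nonneg_right hexp this]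
  simpa [div_self hn'.ne'] using hk n le_rfl

theorem le_exp_mul_of_forall_le_exp_mul_add (hC : 0 ≤ C) (hΦ : MonotoneOn Φ (Icc 0 1))
    (hstep : ∀ x ∈ Icc (0 : ℝ) 1, ∀ y ∈ Icc (0 : ℝ) 1, x ≤ y →
      R y ≤ exp (Φ y - Φ x) * R x + C * (y - x) * (Φ y - Φ x)) :
    R 1 ≤ exp (Φ 1 - Φ 0) * R 0 := by
  have hlim : Tendsto (fun n : ℕ => exp (Φ 1 - Φ 0) * (R 0 + C / n * (Φ 1 - Φ 0))) atTop
      (𝓝 (exp (Φ 1 - Φ 0) * R 0)) := by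
    simpa using (((tendsto_const_div_atTop_nhds_zero_nat C).mul_const (Φ 1 - Φ 0)).const_add
      (R 0)).const_mul (exp (Φ 1 - Φ 0))
  exact ge_of_tendsto hlim (eventually_atTop.2
    ⟨1, fun _ hn => le_exp_mul_add_of_forall_le_exp_mul_add hC hΦ hstep hn⟩)

end Gronwall

section Volterra

variable {f g w : ℝ → ℝ} {K m d : ℝ}

theorem abs_sub_le_integral_abs (hf : ∀ r ∈ Icc 0 d, f r = f 0 + ∫ x in 0..r, w x)
    {c y r : ℝ} (hc : 0 ≤ c) (hcy : c ≤ y) (hyr : y ≤ r) (hrd : r ≤ d)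
    (hint : IntervalIntegrable w volume 0 r) : |f y - f c| ≤ ∫ x in c..r, |w x| := by
  have hint' : ∀ y' ∈ Icc 0 r, IntervalIntegrable w volume 0 y' := fun y' hy' =>
    hint.mono_set (uIcc_subset_uIcc left_mem_uIcc (mem_uIcc_of_le hy'.1 hy'.2))
  rw [hf y ⟨hc.trans hcy, hyr.trans hrd⟩, hf c ⟨hc, (hcy.trans hyr).trans hrd⟩,
    add_sub_add_left_eq_sub,
    integral_interval_sub_left (hint' y ⟨hc.trans hcy, hyr⟩) (hint' c ⟨hc, hcy.trans hyr⟩)]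
  refine (abs_integral_le_integral_abs hcy).trans (integral_mono_interval le_rfl hcy hyr
    (Eventually.of_forall fun _ => abs_nonneg _) ?_)
  exact (hint.mono_set (uIcc_subset_uIcc (mem_uIcc_of_le hc (hcy.trans hyr)) right_mem_uIcc)).abs

/-- If `w` is not integrable on `[0, r]`, then `f r = f 0` by the junk value of the integral.
Otherwise `G = ∫ x in c..r, |w x|` is finite, and `K δ m ≤ 1 / 2` lets it absorb its own
contribution. -/
theorem abs_le_of_volterra_step (hK : 0 ≤ K) (hm : 0 ≤ m) (hwg : ∀ x, |w x| ≤ K * |g x|)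
    (hf : ∀ r ∈ Icc 0 d, f r = f 0 + ∫ x in 0..r, w x)
    (hg : ∀ r ∈ Icc 0 d, ∀ C, (∀ y ∈ Icc 0 r, |f y| ≤ C) → |g r| ≤ |g 0| + C * m)
    {δ c U : ℝ} (hδ0 : 0 ≤ δ) (hδ : K * δ * m ≤ 1 / 2) (hc : 0 ≤ c) (hU0 : 0 ≤ U)
    (hU : ∀ r ∈ Icc 0 d, r ≤ c → |f r| ≤ U) :
    ∀ r ∈ Icc 0 d, r ≤ c + δ → |f r| ≤ 2 * U + 2 * K * δ * |g 0| := by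
  intro r hr hrδ
  have hU2 : U ≤ 2 * U + 2 * K * δ * |g 0| := by
    have : 0 ≤ K * δ * |g 0| := by positivity
    linarith
  rcases le_or_gt r c with hrc | hcr
  · exact (hU r hr hrc).trans hU2
  by_cases hint : IntervalIntegrable w volume 0 r
  swap
  · rw [hf r hr, integral_undef hint, add_zero]
    exact (hU 0 ⟨le_rfl, hr.1.trans hr.2⟩ hc).trans hU2
  set G := ∫ x in c..r, |w x|
  have hG0 : 0 ≤ G := integral_nonneg hcr.le fun _ _ => abs_nonneg _
  have hfG : ∀ y ∈ Icc 0 r, |f y| ≤ U + G := by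
    intro y hy
    rcases le_total y c with hyc | hcy
    · linarith [hU y ⟨hy.1, hy.2.trans hr.2⟩ hyc]
    linarith [hU c ⟨hc, hcr.le.trans hr.2⟩ le_rfl, abs_sub_abs_le_abs_sub (f y) (f c),
      abs_sub_le_integral_abs hf hc hcy hy.2 hr.2 hint]
  have hwG : ∀ x ∈ Icc c r, |w x| ≤ K * (|g 0| + (U + G) * m) := fun x hx =>
    (hwg x).trans (mul_le_mul_of_nonneg_left
      (hg x ⟨hc.trans hx.1, hx.2.trans hr.2⟩ _ fun y hy => hfG y ⟨hy.1, hy.2.trans hx.2⟩) hK)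
  have hwcr : IntervalIntegrable (fun x => |w x|) volume c r :=
    (hint.mono_set (uIcc_subset_uIcc (mem_uIcc_of_le hc hcr.le) right_mem_uIcc)).abs
  have hGle : G ≤ δ * (K * (|g 0| + (U + G) * m)) :=
    calc G ≤ ∫ _ in c..r, K * (|g 0| + (U + G) * m) :=
          integral_mono_on hcr.le hwcr intervalIntegrable_const hwG
      _ = (r - c) * (K * (|g 0| + (U + G) * m)) := by
          rw [intervalIntegral.integral_const, smul_eq_mul]
      _ ≤ δ * (K * (|g 0| + (U + G) * m)) := by gcongr; linarith
  have hKG : K * δ * m * G ≤ G / 2 := by nlinarith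
  have hKU : K * δ * m * U ≤ U / 2 := by nlinarith
  linarith [hfG r ⟨hr.1, le_rfl⟩]

theorem exists_bound_of_volterra (hK : 0 ≤ K) (hm : 0 ≤ m) (hwg : ∀ x, |w x| ≤ K * |g x|)
    (hf : ∀ r ∈ Icc 0 d, f r = f 0 + ∫ x in 0..r, w x)
    (hg : ∀ r ∈ Icc 0 d, ∀ C, (∀ y ∈ Icc 0 r, |f y| ≤ C) → |g r| ≤ |g 0| + C * m) :
    ∃ S, ∀ r ∈ Icc 0 d, |f r| ≤ S ∧ |g r| ≤ S := by
  set δ := 1 / (2 * (K * m + 1))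
  have hδ0 : 0 < δ := by positivity
  have hδ : K * δ * m ≤ 1 / 2 := by
    rw [show K * δ * m = K * m / (2 * (K * m + 1)) by ring, div_le_iff₀ (by positivity)]
    linarith
  have hsteps : ∀ n : ℕ, ∃ U, 0 ≤ U ∧ ∀ r ∈ Icc 0 d, r ≤ n * δ → |f r| ≤ U := by
    intro n
    induction n with
    | zero => exact ⟨|f 0|, abs_nonneg _, fun r hr hr0 => by
        rw [le_antisymm (by simpa using hr0) hr.1]⟩
    | succ n ih =>
      obtain ⟨U, hU0, hU⟩ := ih
      refine ⟨2 * U + 2 * K * δ * |g 0|, by positivity, fun r hr hrn => ?_⟩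
      exact abs_le_of_volterra_step hK hm hwg hf hg hδ0.le hδ (by positivity) hU0 hU r hr
        (by push_cast at hrn; linarith)
  obtain ⟨U, -, hU⟩ := hsteps ⌈d / δ⌉₊
  have hfU : ∀ r ∈ Icc 0 d, |f r| ≤ U := fun r hr =>
    hU r hr (hr.2.trans ((div_le_iff₀ hδ0).1 (Nat.le_ceil _)))
  exact ⟨max U (|g 0| + U * m), fun r hr => ⟨(hfU r hr).trans (le_max_left _ _),
    (hg r hr U fun y hy => hfU y ⟨hy.1, hy.2.trans hr.2⟩).trans (le_max_right _ _)⟩⟩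

end Volterra

theorem mul_mem_uIcc_zero_mul {t s s' : ℝ} (h : s ∈ [[0, s']]) : t * s ∈ [[0, t * s']] := by
  have := mem_image_of_mem (t * ·) h
  rwa [image_const_mul_uIcc, mul_zero] at this

theorem exists_mul_eq_of_mem_uIcc_zero_mul {t r s' : ℝ} (h : r ∈ [[0, t * s']]) :
    ∃ s ∈ [[0, s']], t * s = r := by
  have : r ∈ (t * ·) '' [[0, s']] := by rwa [image_const_mul_uIcc, mul_zero]
  exact this

theorem abs_div_le_mul {p q S A : ℝ} (hp : |p| ≤ S) (hq : |q⁻¹| ≤ A) : |p / q| ≤ S * A := by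
  rw [div_eq_mul_inv, abs_mul]
  exact mul_le_mul hp hq (abs_nonneg _) ((abs_nonneg _).trans hp)

theorem abs_integral_le_of_abs_le_const {f : ℝ → ℝ} {x y C : ℝ} (hC : ∀ r ∈ Ι x y, |f r| ≤ C) :
    |∫ r in x..y, f r| ≤ C * |y - x| :=
  norm_integral_le_of_norm_le_const (a := x) (b := y) (f := f) hC

theorem intervalIntegrable_of_abs_le {f : ℝ → ℝ} {μ : Measure ℝ} [IsFiniteMeasureOnCompacts μ]
    {x y C : ℝ} (hf : Measurable f) (hC : ∀ r ∈ Ι x y, |f r| ≤ C) :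
    IntervalIntegrable f μ x y :=
  intervalIntegrable_iff.2 (Measure.integrableOn_of_bounded (by exact measure_Ioc_lt_top.ne)
    hf.aestronglyMeasurable (ae_restrict_of_forall_mem measurableSet_uIoc hC))

theorem abs_integral_sub_integral_le {μp μm : Measure ℝ} [IsFiniteMeasureOnCompacts μp]
    [IsFiniteMeasureOnCompacts μm] {f : ℝ → ℝ} {x y C : ℝ} (hC : ∀ r ∈ Ι x y, |f r| ≤ C) :
    |(∫ r in x..y, f r ∂μp) - ∫ r in x..y, f r ∂μm| ≤ C * (μp + μm).real (Ι x y) := by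
  have h (μ : Measure ℝ) [IsFiniteMeasureOnCompacts μ] :
      |∫ r in x..y, f r ∂μ| ≤ C * μ.real (Ι x y) := by
    rw [← Real.norm_eq_abs, norm_integral_eq_norm_integral_uIoc]
    exact norm_setIntegral_le_of_norm_le_const measure_Ioc_lt_top hC
  rw [measureReal_add_apply (by exact measure_Ioc_lt_top.ne) (by exact measure_Ioc_lt_top.ne),
    mul_add]
  exact (abs_sub _ _).trans (add_le_add (h μp) (h μm))

namespace IsSolution0

variable {a u v : ℝ → ℝ} {μp μm : Measure ℝ} {A : ℝ}

theorem v_sub_eq (hsol : IsSolution0 a μp μm u v) (x y : ℝ) :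
    v y - v x = (∫ r in x..y, u r ∂μp) - ∫ r in x..y, u r ∂μm := by
  rcases le_total x y with h | h
  · rw [integral_of_le h, integral_of_le h, hsol.eq_v x y h]
  · rw [integral_of_ge h, integral_of_ge h, ← neg_sub (v x), hsol.eq_v y x h]
    ring

theorem sub_eq_integral (hsol : IsSolution0 a μp μm u v) (ha : Measurable a)
    (haA : ∀ x, |(a x)⁻¹| ≤ A) {t S x y : ℝ} (hS : ∀ r ∈ [[0, t]], |v r| ≤ S)
    (hx : x ∈ [[0, t]]) (hy : y ∈ [[0, t]]) : u y - u x = ∫ s in x..y, v s / a s := by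
  have hint : IntervalIntegrable (fun s => v s / a s) volume 0 t :=
    intervalIntegrable_of_abs_le (hsol.meas_v.div ha) fun r hr =>
      abs_div_le_mul (hS r (uIoc_subset_uIcc hr)) (haA r)
  rw [hsol.eq_u y, hsol.eq_u x, add_sub_add_left_eq_sub, integral_interval_sub_left
    (hint.mono_set (uIcc_subset_uIcc left_mem_uIcc hy))
    (hint.mono_set (uIcc_subset_uIcc left_mem_uIcc hx))]

theorem abs_u_sub_le (hsol : IsSolution0 a μp μm u v) (ha : Measurable a)
    (haA : ∀ x, |(a x)⁻¹| ≤ A) {t S x y : ℝ} (hS : ∀ r ∈ [[0, t]], |v r| ≤ S)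
    (hx : x ∈ [[0, t]]) (hy : y ∈ [[0, t]]) : |u y - u x| ≤ S * A * |y - x| := by
  rw [hsol.sub_eq_integral ha haA hS hx hy]
  exact abs_integral_le_of_abs_le_const fun r hr =>
    abs_div_le_mul (hS r (uIcc_subset_uIcc hx hy (uIoc_subset_uIcc hr))) (haA r)

variable [IsFiniteMeasureOnCompacts μp] [IsFiniteMeasureOnCompacts μm]

theorem abs_v_sub_le (hsol : IsSolution0 a μp μm u v) {x y C : ℝ}
    (hC : ∀ r ∈ Ι x y, |u r| ≤ C) : |v y - v x| ≤ C * (μp + μm).real (Ι x y) := by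
  rw [hsol.v_sub_eq]
  exact abs_integral_sub_integral_le hC

/-- The integrals in `eq_u` and `eq_v` take the junk value `0` on non-integrable integrands, so
even local boundedness of a solution needs a proof. -/
theorem exists_bound (hsol : IsSolution0 a μp μm u v) (haA : ∀ x, |(a x)⁻¹| ≤ A) (t : ℝ) :
    ∃ S, ∀ r ∈ [[0, t]], |u r| ≤ S ∧ |v r| ≤ S := by
  have hA : 0 ≤ A := (abs_nonneg _).trans (haA 0)
  -- parametrizing the segment from `0` to `t` by `s ↦ t * s` handles both signs of `t` at once
  obtain ⟨S, hS⟩ := exists_bound_of_volterra (f := fun s => u (t * s)) (g := fun s => v (t * s))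
    (w := fun s => t * (v (t * s) / a (t * s))) (K := |t| * A) (m := (μp + μm).real (Ι 0 t))
    (d := 1) (by positivity) measureReal_nonneg
    (fun s => by
      rw [abs_mul, mul_assoc, mul_comm A]
      exact mul_le_mul_of_nonneg_left (abs_div_le_mul le_rfl (haA _)) (abs_nonneg t))
    (fun s _ => by
      have hsubst := mul_integral_comp_mul_left (a := 0) (b := s) (f := fun r => v r / a r) t
      rw [mul_zero] at hsubst
      rw [mul_zero, hsol.eq_u, intervalIntegral.integral_const_mul, hsubst])
    (fun s hs C hC => by
      have hC0 : 0 ≤ C := (abs_nonneg _).trans (hC 0 ⟨le_rfl, hs.1⟩)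
      have hsub : [[0, t * s]] ⊆ [[0, t]] := uIcc_subset_uIcc left_mem_uIcc
        (by simpa using mul_mem_uIcc_zero_mul (t := t) (mem_uIcc_of_le hs.1 hs.2))
      have hv := hsol.abs_v_sub_le (x := 0) (y := t * s) (C := C) fun r hr => by
        obtain ⟨θ, hθ, rfl⟩ := exists_mul_eq_of_mem_uIcc_zero_mul (uIoc_subset_uIcc hr)
        rw [uIcc_of_le hs.1] at hθ
        exact hC θ hθ
      have hν := measureReal_mono (μ := μp + μm) (uIoc_subset_uIoc_of_uIcc_subset_uIcc hsub)
        (by exact measure_Ioc_lt_top.ne)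
      simp only [mul_zero]
      nlinarith [abs_sub_abs_le_abs_sub (v (t * s)) (v 0)])
  refine ⟨S, fun r hr => ?_⟩
  obtain ⟨s, hs, rfl⟩ := exists_mul_eq_of_mem_uIcc_zero_mul (s' := 1) (by rwa [mul_one])
  exact hS s (by rwa [uIcc_of_le zero_le_one] at hs)

theorem exists_u_sub_eq (hsol : IsSolution0 a μp μm u v) (ha : Measurable a)
    (haA : ∀ x, |(a x)⁻¹| ≤ A) {t S x y : ℝ} (hS : ∀ r ∈ [[0, t]], |u r| ≤ S ∧ |v r| ≤ S)
    (hx : x ∈ [[0, t]]) (hy : y ∈ [[0, t]]) :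
    ∃ c e, u y - u x = c * v x + e ∧ |c| ≤ A * |y - x| ∧
      |e| ≤ S * (μp + μm).real (Ι x y) * A * |y - x| := by
  have hxy : [[x, y]] ⊆ [[0, t]] := uIcc_subset_uIcc hx hy
  have hS0 : 0 ≤ S := (abs_nonneg _).trans (hS x hx).1
  have hint_v : IntervalIntegrable (fun s => v s / a s) volume x y :=
    intervalIntegrable_of_abs_le (hsol.meas_v.div ha) fun r hr =>
      abs_div_le_mul (hS r (hxy (uIoc_subset_uIcc hr))).2 (haA r)
  have hint_c : IntervalIntegrable (fun s => v x * (a s)⁻¹) volume x y :=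
    intervalIntegrable_of_abs_le (measurable_const.mul ha.inv) fun r _ => by
      rw [abs_mul]; exact mul_le_mul_of_nonneg_left (haA r) (abs_nonneg _)
  refine ⟨∫ s in x..y, (a s)⁻¹, ∫ s in x..y, (v s - v x) / a s, ?_,
    abs_integral_le_of_abs_le_const fun r _ => haA r,
    abs_integral_le_of_abs_le_const fun r hr => abs_div_le_mul ?_ (haA r)⟩
  · rw [hsol.sub_eq_integral ha haA (fun r hr => (hS r hr).2) hx hy, mul_comm,
      ← intervalIntegral.integral_const_mul, ← integral_add hint_c
        (by simpa only [sub_div, div_eq_mul_inv, sub_mul] using hint_v.sub hint_c)]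
    congr 1 with s
    ring
  · have hsub : Ι x r ⊆ Ι x y :=
      uIoc_subset_uIoc_of_uIcc_subset_uIcc (uIcc_subset_uIcc left_mem_uIcc (uIoc_subset_uIcc hr))
    exact (hsol.abs_v_sub_le fun q hq => (hS q (hxy (uIoc_subset_uIcc (hsub hq)))).1).trans
      (mul_le_mul_of_nonneg_left (measureReal_mono hsub (by exact measure_Ioc_lt_top.ne)) hS0)

theorem exists_v_sub_eq (hsol : IsSolution0 a μp μm u v) (ha : Measurable a)
    (haA : ∀ x, |(a x)⁻¹| ≤ A) {t S x y : ℝ} (hS : ∀ r ∈ [[0, t]], |u r| ≤ S ∧ |v r| ≤ S)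
    (hx : x ∈ [[0, t]]) (hy : y ∈ [[0, t]]) :
    ∃ c e, v y - v x = c * u x + e ∧ |c| ≤ (μp + μm).real (Ι x y) ∧
      |e| ≤ S * A * |y - x| * (μp + μm).real (Ι x y) := by
  have hxy : [[x, y]] ⊆ [[0, t]] := uIcc_subset_uIcc hx hy
  have hint (μ : Measure ℝ) [IsFiniteMeasureOnCompacts μ] : IntervalIntegrable u μ x y :=
    intervalIntegrable_of_abs_le hsol.meas_u fun r hr => (hS r (hxy (uIoc_subset_uIcc hr))).1
  refine ⟨(∫ _ in x..y, (1 : ℝ) ∂μp) - ∫ _ in x..y, (1 : ℝ) ∂μm,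
    (∫ r in x..y, (u r - u x) ∂μp) - ∫ r in x..y, (u r - u x) ∂μm, ?_,
    by simpa using abs_integral_sub_integral_le (f := fun _ => (1 : ℝ)) (C := 1) (by simp),
    abs_integral_sub_integral_le fun r hr => ?_⟩
  · rw [hsol.v_sub_eq, integral_sub (hint μp) intervalIntegrable_const,
      integral_sub (hint μm) intervalIntegrable_const]
    simp only [integral_const', smul_eq_mul]
    ring
  · have hr' := uIoc_subset_uIcc hr
    exact (hsol.abs_u_sub_le ha haA (fun q hq => (hS q hq).2) hx (hxy hr')).trans
      (mul_le_mul_of_nonneg_left (abs_sub_left_of_mem_uIcc hr')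
        (mul_nonneg ((abs_nonneg _).trans (hS x hx).1) ((abs_nonneg _).trans (haA 0))))

theorem sqrt_le_exp_mul_add (hsol : IsSolution0 a μp μm u v) (ha : Measurable a)
    (haA : ∀ x, |(a x)⁻¹| ≤ A) {ω t S x y : ℝ} (hω : 0 < ω)
    (hS : ∀ r ∈ [[0, t]], |u r| ≤ S ∧ |v r| ≤ S) (hx : x ∈ [[0, t]]) (hy : y ∈ [[0, t]]) :
    √(ω ^ 2 * u y ^ 2 + v y ^ 2)
      ≤ exp ((ω * A * |y - x| + (μp + μm).real (Ι x y) / ω) / 2) * √(ω ^ 2 * u x ^ 2 + v x ^ 2)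
        + 2 * ω * A * ((ω + 2) * S) * |y - x|
          * ((ω * A * |y - x| + (μp + μm).real (Ι x y) / ω) / 2) := by
  have hA : 0 ≤ A := (abs_nonneg _).trans (haA 0)
  have hS0 : 0 ≤ S := (abs_nonneg _).trans (hS x hx).1
  set ν := (μp + μm).real (Ι x y)
  obtain ⟨c₁, e₁, hu, hc₁, he₁⟩ := hsol.exists_u_sub_eq ha haA hS hx hy
  obtain ⟨c₂, e₂, hv, hc₂, he₂⟩ := hsol.exists_v_sub_eq ha haA hS hx hy
  have key := sqrt_perturbed_shear_le (ω * c₁) (c₂ / ω) (ω * e₁) e₂ (ω * u x) (v x)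
  rw [show ω * u x + ω * c₁ * v x + ω * e₁ = ω * u y by linear_combination -ω * hu,
    show v x + c₂ / ω * (ω * u x) + e₂ = v y by field_simp; linear_combination -hv,
    mul_pow, mul_pow] at key
  refine key.trans (add_le_add (mul_le_mul_of_nonneg_right (exp_le_exp.2 ?_) (sqrt_nonneg _)) ?_)
  · rw [abs_mul, abs_div, abs_of_pos hω]
    have h₁ : ω * |c₁| ≤ ω * A * |y - x| := by
      rw [mul_assoc]; exact mul_le_mul_of_nonneg_left hc₁ hω.le
    linarith [div_le_div_of_nonneg_right hc₂ hω.le]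
  have hcc : |ω * c₁ * (c₂ / ω) * v x| ≤ A * |y - x| * ν * S := by
    rw [show ω * c₁ * (c₂ / ω) * v x = c₁ * c₂ * v x by field_simp, abs_mul, abs_mul]
    exact mul_le_mul (mul_le_mul hc₁ hc₂ (abs_nonneg _) (by positivity)) (hS x hx).2
      (abs_nonneg _) (by positivity)
  have herr : |ω * e₁| + |e₂| + |ω * c₁ * (c₂ / ω) * v x| ≤ A * |y - x| * ((ω + 2) * S) * ν := by
    rw [abs_mul, abs_of_pos hω]
    nlinarith [mul_le_mul_of_nonneg_left he₁ hω.le]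
  refine herr.trans (le_of_le_of_eq ?_ (by field_simp :
    A * |y - x| * ((ω + 2) * S) * (ω ^ 2 * A * |y - x| + ν) = _))
  exact mul_le_mul_of_nonneg_left (le_add_of_nonneg_left (by positivity)) (by positivity)

theorem sqrt_le_exp_mul (hsol : IsSolution0 a μp μm u v) (ha : Measurable a)
    (haA : ∀ x, |(a x)⁻¹| ≤ A) {ω : ℝ} (hω : 0 < ω) (t : ℝ) :
    √(ω ^ 2 * u t ^ 2 + v t ^ 2)
      ≤ exp ((ω * A * |t| + (μp + μm).real (Ι 0 t) / ω) / 2) * √(ω ^ 2 * u 0 ^ 2 + v 0 ^ 2) := by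
  obtain ⟨S, hS⟩ := hsol.exists_bound haA t
  have hS0 : 0 ≤ S := (abs_nonneg _).trans (hS 0 left_mem_uIcc).1
  have hA : 0 ≤ A := (abs_nonneg _).trans (haA 0)
  have hmem : ∀ s ∈ Icc (0 : ℝ) 1, t * s ∈ [[0, t]] := fun s hs => by
    simpa using mul_mem_uIcc_zero_mul (t := t) (mem_uIcc_of_le hs.1 hs.2)
  set Φ : ℝ → ℝ := fun s => (ω * A * |t| * s + (μp + μm).real (Ι 0 (t * s)) / ω) / 2
  have hΦ : ∀ s ∈ Icc (0 : ℝ) 1, ∀ s', s ≤ s' → Φ s' - Φ s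
      = (ω * A * |t * s' - t * s| + (μp + μm).real (Ι (t * s) (t * s')) / ω) / 2 := by
    intro s hs s' hss'
    simp only [Φ]
    rw [← measureReal_uIoc_add_measureReal_uIoc _
      (mul_mem_uIcc_zero_mul (mem_uIcc_of_le hs.1 hss')), ← mul_sub, abs_mul,
      abs_of_nonneg (sub_nonneg.2 hss')]
    ring
  have hmono : MonotoneOn Φ (Icc 0 1) := fun s hs s' _ hss' => by
    have : 0 ≤ ω * A * |t * s' - t * s| + (μp + μm).real (Ι (t * s) (t * s')) / ω := by
      positivity
    linarith [hΦ s hs s' hss']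
  have hstep := le_exp_mul_of_forall_le_exp_mul_add
    (R := fun s => √(ω ^ 2 * u (t * s) ^ 2 + v (t * s) ^ 2))
    (C := 2 * ω * A * ((ω + 2) * S) * |t|) (by positivity) hmono fun s hs s' hs' hss' => by
      rw [hΦ s hs s' hss']
      refine (hsol.sqrt_le_exp_mul_add ha haA hω hS (hmem s hs) (hmem s' hs')).trans_eq ?_
      rw [← mul_sub, abs_mul, abs_of_nonneg (sub_nonneg.2 hss')]
      ring
  simpa [Φ] using hstep

end IsSolution0

namespace AM

variable {ρ μp μm : Measure ℝ} {a : ℝ → ℝ}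

theorem iInf_le (hAM : AM ρ a μp μm) (x : ℝ) : ⨅ y, a y ≤ a x := by
  refine ciInf_le ?_ x
  by_contra h
  have := hAM.inf_pos
  rw [iInf, Real.sInf_of_not_bddBelow h] at this
  exact this.false

theorem pos (hAM : AM ρ a μp μm) (x : ℝ) : 0 < a x :=
  hAM.inf_pos.trans_le (hAM.iInf_le x)

theorem abs_inv_le_supNorm (hAM : AM ρ a μp μm) (x : ℝ) :
    |(a x)⁻¹| ≤ supNorm fun x => 1 / a x := by
  rw [abs_of_pos (inv_pos.2 (hAM.pos x)), ← one_div]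
  refine le_csSup ⟨1 / ⨅ y, a y, ?_⟩ ⟨x, rfl⟩
  rintro _ ⟨y, rfl⟩
  exact one_div_le_one_div_of_le hAM.inf_pos (hAM.iInf_le y)

end AM

theorem optimized_growth_bound_general
    (ρ : MeasureTheory.Measure ℝ)
    (a : ℝ → ℝ) (μp μm : MeasureTheory.Measure ℝ) (hAM : AM ρ a μp μm)
    (u v : ℝ → ℝ) (hsol : IsSolution0 a μp μm u v)
    (ω : ℝ) (hω : ω = Real.sqrt (unifNorm (μp + μm) / supNorm (fun x => 1 / a x))) :
    ∀ t : ℝ, Real.sqrt (ω ^ 2 * u t ^ 2 + v t ^ 2) ≤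
      Real.sqrt (ω ^ 2 * u 0 ^ 2 + v 0 ^ 2) *
        Real.exp (ω * supNorm (fun x => 1 / a x) * (|t| + 1 / 2)) := by
  intro t
  have := hAM.finp.isFiniteMeasureOnCompacts
  have := hAM.finm.isFiniteMeasureOnCompacts
  set A := supNorm fun x => 1 / a x
  set M := unifNorm (μp + μm)
  have haA := hAM.abs_inv_le_supNorm
  have hA : 0 < A := (abs_pos.2 (inv_pos.2 (hAM.pos 0)).ne').trans_le (haA 0)
  have hν : (μp + μm).real (Ι 0 t) ≤ M * (|t| + 1) := by
    simpa using measureReal_uIoc_le_unifNorm hAM.unif_lt_top 0 t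
  rcases (show 0 ≤ M from ENNReal.toReal_nonneg).eq_or_lt with hM | hM
  · obtain ⟨S, hS⟩ := hsol.exists_bound haA t
    have hv := hsol.abs_v_sub_le (x := 0) (y := t) fun r hr => (hS r (uIoc_subset_uIcc hr)).1
    rw [le_antisymm (by simpa [← hM] using hν) measureReal_nonneg, mul_zero, abs_nonpos_iff,
      sub_eq_zero] at hv
    simp [hω, ← hM, hv]
  have hω0 : 0 < ω := hω ▸ sqrt_pos.2 (div_pos hM hA)
  have hMω : ω ^ 2 * A = M := by rw [hω, sq_sqrt (div_pos hM hA).le, div_mul_cancel₀ _ hA.ne']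
  have hexp : (μp + μm).real (Ι 0 t) / ω ≤ ω * A * (|t| + 1) := by
    rw [div_le_iff₀ hω0]
    exact hν.trans_eq (by rw [← hMω]; ring)
  calc _ ≤ exp ((ω * A * |t| + (μp + μm).real (Ι 0 t) / ω) / 2) * √(ω ^ 2 * u 0 ^ 2 + v 0 ^ 2) :=
        hsol.sqrt_le_exp_mul hAM.meas_a haA hω0 t
    _ ≤ exp (ω * A * (|t| + 1 / 2)) * √(ω ^ 2 * u 0 ^ 2 + v 0 ^ 2) := by gcongr; linarith
    _ = _ := mul_comm _ _

/-- Optimized growth bound for solutions. -/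
theorem optimized_growth_bound
    (ρ : MeasureTheory.Measure ℝ) (hρ0 : ρ ≠ 0) (hρfin : unifE ρ < ⊤)
    (hρper : ∃ p : ℝ, IsPeriod ρ p)
    (a : ℝ → ℝ) (μp μm : MeasureTheory.Measure ℝ) (hAM : AM ρ a μp μm)
    (u v : ℝ → ℝ) (hsol : IsSolution0 a μp μm u v)
    (ω : ℝ) (hω : ω = Real.sqrt (unifNorm (μp + μm) / supNorm (fun x => 1 / a x))) :
    ∀ t : ℝ, Real.sqrt (ω ^ 2 * u t ^ 2 + v t ^ 2) ≤
      Real.sqrt (ω ^ 2 * u 0 ^ 2 + v 0 ^ 2) *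
        Real.exp (ω * supNorm (fun x => 1 / a x) * (|t| + 1 / 2)) :=
  optimized_growth_bound_general ρ a μp μm hAM u v hsol ω hω
end
end

section
/- Control of the quasi-derivative by the solution: Let (a, μ) ∈ AM(ℝ) (with respect to some nonzero nonnegative periodic Borel measure ρ with ‖ρ‖_unif < ∞), let (u, v) be a solution of H_{a,μ} u = 0, and let r > 0. Set C := max{ 2‖a‖_∞ / r , ‖μ‖_unif / 2 } + ⌈r⌉·‖μ‖_unif. Then for every α ∈ ℝ, writing I := (α, α + r], one has sup_{t ∈ I} |v(t)| ≤ C · sup_{t ∈ I} |u(t)|. -/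
open MeasureTheory Set Filter

noncomputable section

/-!
The quasi-derivative `v` enters the equation for `u` only through `∫ v / a`, which is a junk
value where `v / a` fails to be integrable, so local integrability of `v / a` comes first. On a
window of length `h` with `2 h ‖μ‖_unif ≤ inf a`, the two integral equations give a Gronwall-type
bound `|u| ≤ 2 |u s| + 2 h |v s| / inf a`; off the interval where the integral is genuine, `u` is
the constant `u 0`. Either way `u`, hence `v` and `v / a`, stay bounded on the window, and
integrability spreads from `0` over all of `ℝ`.

With `M := sup_I |u|` and `K := max (2 ‖a‖_∞ / r) (‖μ‖_unif / 2)`, some `s₀` in the closure of `I`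
has `|v s₀| ≤ K M`. If `v > K M` throughout, then `u` would rise by more than `2 M` across `I`
(and symmetrically for `v < -K M`). If `v` takes both signs, note that `v` is right-continuous
and its left jumps are at most `M |μ|({τ}) ≤ M ‖μ‖_unif ≤ 2 K M`, so it cannot pass from above
`K M` to below `-K M` without visiting `[-K M, K M]`. Finally
`|v t - v s₀| ≤ M |μ|((s₀, t]) ≤ ⌈r⌉ ‖μ‖_unif M` for `t ∈ I`.
-/

open Topology

section UniformNorm

lemma unifNorm_nonneg (ν : Measure ℝ) : 0 ≤ unifNorm ν := ENNReal.toReal_nonneg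

variable {ν : Measure ℝ}

lemma measure_Ioc_le_unifE {s t : ℝ} (h : t ≤ s + 1) : ν (Ioc s t) ≤ unifE ν :=
  (measure_mono (Ioc_subset_Ioc_right h)).trans (le_iSup (fun x => ν (Ioc x (x + 1))) s)

lemma measure_Ioc_le_nat_mul_unifE {s t : ℝ} (n : ℕ) (h : t ≤ s + n) :
    ν (Ioc s t) ≤ n * unifE ν := by
  induction n generalizing t with
  | zero => simp [Ioc_eq_empty (not_lt.2 (by simpa using h))]
  | succ n ih =>
    calc ν (Ioc s t) ≤ ν (Ioc s (s + n) ∪ Ioc (s + n) t) :=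
          measure_mono fun x hx => (le_or_gt x (s + n)).elim (fun h' => Or.inl ⟨hx.1, h'⟩)
            fun h' => Or.inr ⟨h', hx.2⟩
      _ ≤ n * unifE ν + unifE ν :=
          (measure_union_le _ _).trans (add_le_add (ih le_rfl)
            (measure_Ioc_le_unifE (by push_cast at h; linarith)))
      _ = ↑(n + 1) * unifE ν := by push_cast; ring

lemma measureReal_Ioc_le_nat_mul_unifNorm (hν : unifE ν < ⊤) {s t : ℝ} (n : ℕ)
    (h : t ≤ s + n) : ν.real (Ioc s t) ≤ n * unifNorm ν := by
  simpa [measureReal_def, unifNorm] using ENNReal.toReal_mono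
    (ENNReal.mul_ne_top (ENNReal.natCast_ne_top n) hν.ne) (measure_Ioc_le_nat_mul_unifE n h)

lemma measureReal_singleton_le_unifNorm (hν : unifE ν < ⊤) (x : ℝ) : ν.real {x} ≤ unifNorm ν := by
  have hsub : ({x} : Set ℝ) ⊆ Ioc (x - 1) x := singleton_subset_iff.2 ⟨by linarith, le_rfl⟩
  exact ENNReal.toReal_mono hν.ne <| (measure_mono hsub).trans (measure_Ioc_le_unifE (by linarith))

end UniformNorm

lemma abs_setIntegral_sub_setIntegral_le {α : Type*} [MeasurableSpace α] {μ₁ μ₂ : Measure α}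
    {s : Set α} {f : α → ℝ} {M : ℝ} (hs : (μ₁ + μ₂) s < ⊤) (hf : ∀ x ∈ s, ‖f x‖ ≤ M) :
    |(∫ x in s, f x ∂μ₁) - ∫ x in s, f x ∂μ₂| ≤ M * (μ₁ + μ₂).real s := by
  obtain ⟨h₁, h₂⟩ := ENNReal.add_lt_top.1 (Measure.add_apply μ₁ μ₂ s ▸ hs)
  rw [measureReal_add_apply h₁.ne h₂.ne, mul_add]
  exact (abs_sub _ _).trans (add_le_add (norm_setIntegral_le_of_norm_le_const h₁ hf)
    (norm_setIntegral_le_of_norm_le_const h₂ hf))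

lemma tendsto_measure_Ioc_nhdsGT (ν : Measure ℝ) [IsFiniteMeasureOnCompacts ν] (τ : ℝ) :
    Tendsto (fun t => ν (Ioc τ t)) (𝓝[>] τ) (𝓝 0) := by
  have hlim := tendsto_measure_biInter_gt (μ := ν) (s := fun t => Ioc τ t) (a := τ)
    (fun _ _ => measurableSet_Ioc.nullMeasurableSet) (fun _ _ _ hij => Ioc_subset_Ioc_right hij)
    ⟨τ + 1, by simp, measure_Ioc_lt_top.ne⟩
  have hempty : ⋂ t > τ, Ioc τ t = ∅ := by
    refine eq_empty_of_forall_notMem fun x hx => ?_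
    simp only [mem_iInter, mem_Ioc] at hx
    have hτx := (hx (τ + 1) (by simp)).1
    linarith [(hx ((τ + x) / 2) (by linarith)).2]
  rwa [hempty, measure_empty] at hlim

lemma tendsto_measure_Ioc_nhdsLT (ν : Measure ℝ) [IsFiniteMeasureOnCompacts ν] (τ : ℝ) :
    Tendsto (fun t => ν (Ioc t τ)) (𝓝[<] τ) (𝓝 (ν {τ})) := by
  have hlim := tendsto_measure_biInter_gt (ι := ℝᵒᵈ) (μ := ν)
    (s := fun t => Ioc (OrderDual.ofDual t) τ) (a := OrderDual.toDual τ)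
    (fun _ _ => measurableSet_Ioc.nullMeasurableSet) (fun _ _ _ hij => Ioc_subset_Ioc_left hij)
    ⟨OrderDual.toDual (τ - 1), show τ - 1 < τ by linarith, measure_Ioc_lt_top.ne⟩
  have hinter : ⋂ t > OrderDual.toDual τ, Ioc (OrderDual.ofDual t) τ = {τ} := by
    refine Subset.antisymm (fun x hx => ?_) fun x hx => by simp_all
    simp only [mem_iInter, mem_Ioc] at hx
    refine le_antisymm (hx (OrderDual.toDual (τ - 1)) (show τ - 1 < τ by linarith)).2 ?_
    by_contra! hxτ
    exact lt_irrefl _ (hx (OrderDual.toDual x) hxτ).1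
  rwa [hinter] at hlim

section Continuation

variable {u v f : ℝ → ℝ} {c N : ℝ}

lemma abs_le_of_primitive_of_abs_sub_le (hc : 0 ≤ c) (hN : 0 ≤ N)
    (hu : ∀ t, u t = u 0 + ∫ s in (0 : ℝ)..t, f s) (hfv : ∀ x, |f x| ≤ c * |v x|)
    (hv : ∀ s t B, |t - s| ≤ 1 → (∀ x ∈ uIcc s t, |u x| ≤ B) → |v t - v s| ≤ N * B)
    {h s x : ℝ} (hh : h ≤ 1) (hhcN : 2 * h * c * N ≤ 1) (hs : IntervalIntegrable f volume 0 s)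
    (hx : IntervalIntegrable f volume 0 x) (hsx : |x - s| ≤ h) :
    |u x| ≤ 2 * |u s| + 2 * h * c * |v s| := by
  have hsx' : IntervalIntegrable f volume s x := hs.symm.trans hx
  set B := |u s| + |(∫ y in s..x, |f y|)|
  have hB0 : 0 ≤ B := by positivity
  have hu_le : ∀ y ∈ uIcc s x, |u y| ≤ B := by
    intro y hy
    have hsy : IntervalIntegrable f volume s y := hsx'.mono_set (uIcc_subset_uIcc_left hy)
    have hdiff : u y = u s + ∫ z in s..y, f z := by
      rw [hu y, hu s, ← intervalIntegral.integral_interval_sub_left (hs.trans hsy) hs]; ring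
    have hmono : |(∫ z in s..y, |f z|)| ≤ |(∫ z in s..x, |f z|)| :=
      intervalIntegral.abs_integral_mono_interval
        (uIoc_subset_uIoc_of_uIcc_subset_uIcc (uIcc_subset_uIcc_left hy))
        (Eventually.of_forall fun _ => abs_nonneg _) hsx'.abs
    calc |u y| ≤ |u s| + |∫ z in s..y, f z| := hdiff ▸ abs_add_le _ _
      _ ≤ |u s| + |(∫ z in s..y, |f z|)| := by
          have := intervalIntegral.norm_integral_le_abs_integral_norm (f := f) (a := s) (b := y)
            (μ := volume)
          simp only [Real.norm_eq_abs] at this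
          linarith
      _ ≤ B := add_le_add_right hmono _
  have hf_le : ∀ y ∈ uIoc s x, |f y| ≤ c * (|v s| + N * B) := by
    intro y hy
    have hsy := uIcc_subset_uIcc_left (uIoc_subset_uIcc hy)
    have hvy := hv s y B ((abs_sub_le_of_uIcc_subset_uIcc hsy).trans (hsx.trans hh))
      fun z hz => hu_le z (hsy hz)
    calc |f y| ≤ c * |v y| := hfv y
      _ ≤ c * (|v s| + N * B) := by gcongr; linarith [abs_sub_abs_le_abs_sub (v y) (v s)]
  have hint : |(∫ y in s..x, |f y|)| ≤ c * (|v s| + N * B) * h := by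
    calc |(∫ y in s..x, |f y|)| ≤ c * (|v s| + N * B) * |x - s| := by
          simpa using intervalIntegral.norm_integral_le_of_norm_le_const
            (f := fun y => |f y|) (by simpa using hf_le)
      _ ≤ c * (|v s| + N * B) * h := by gcongr
  have hhalf : h * c * N * B ≤ B / 2 := by nlinarith
  calc |u x| ≤ B := hu_le x right_mem_uIcc
    _ ≤ 2 * |u s| + 2 * h * c * |v s| := by nlinarith

lemma IntervalIntegrable.extend_of_primitive_of_abs_sub_le (hf : Measurable f) (hc : 0 ≤ c)
    (hN : 0 ≤ N) (hu : ∀ t, u t = u 0 + ∫ s in (0 : ℝ)..t, f s) (hfv : ∀ x, |f x| ≤ c * |v x|)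
    (hv : ∀ s t B, |t - s| ≤ 1 → (∀ x ∈ uIcc s t, |u x| ≤ B) → |v t - v s| ≤ N * B)
    {h s x : ℝ} (hh : h ≤ 1) (hhcN : 2 * h * c * N ≤ 1) (hs : IntervalIntegrable f volume 0 s)
    (hsx : |x - s| ≤ h) : IntervalIntegrable f volume 0 x := by
  have hh0 : 0 ≤ h := (abs_nonneg _).trans hsx
  set B := 2 * |u s| + 2 * h * c * |v s| + |u 0|
  -- off the maximal interval of integrability, `u` takes the junk value `u 0`
  have hu_le : ∀ y ∈ uIcc s x, |u y| ≤ B := by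
    intro y hy
    by_cases hy0 : IntervalIntegrable f volume 0 y
    · have := abs_le_of_primitive_of_abs_sub_le hc hN hu hfv hv hh hhcN hs hy0
        ((abs_sub_le_of_uIcc_subset_uIcc (uIcc_subset_uIcc_left hy)).trans hsx)
      linarith [abs_nonneg (u 0)]
    · rw [hu y, intervalIntegral.integral_undef hy0, add_zero]
      have : 0 ≤ 2 * |u s| + 2 * h * c * |v s| := by positivity
      linarith
  have hf_le : ∀ y ∈ uIoc s x, ‖f y‖ ≤ c * (|v s| + N * B) := by
    intro y hy
    have hsy := uIcc_subset_uIcc_left (uIoc_subset_uIcc hy)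
    have hvy := hv s y B ((abs_sub_le_of_uIcc_subset_uIcc hsy).trans (hsx.trans hh))
      fun z hz => hu_le z (hsy hz)
    calc ‖f y‖ ≤ c * |v y| := hfv y
      _ ≤ c * (|v s| + N * B) := by gcongr; linarith [abs_sub_abs_le_abs_sub (v y) (v s)]
  exact hs.trans <| intervalIntegrable_const.mono_fun' hf.aestronglyMeasurable
    ((ae_restrict_iff' measurableSet_uIoc).2 (Eventually.of_forall hf_le))

theorem intervalIntegrable_of_primitive_of_abs_sub_le (hf : Measurable f) (hc : 0 ≤ c)
    (hN : 0 ≤ N) (hu : ∀ t, u t = u 0 + ∫ s in (0 : ℝ)..t, f s) (hfv : ∀ x, |f x| ≤ c * |v x|)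
    (hv : ∀ s t B, |t - s| ≤ 1 → (∀ x ∈ uIcc s t, |u x| ≤ B) → |v t - v s| ≤ N * B)
    (s t : ℝ) : IntervalIntegrable f volume s t := by
  set h := 1 / (2 * c * N + 1)
  have hcN : 0 ≤ c * N := mul_nonneg hc hN
  have hh0 : 0 < h := by positivity
  have hh : h ≤ 1 := div_le_one_of_le₀ (by linarith) (by positivity)
  have hhcN : 2 * h * c * N ≤ 1 := by
    rw [show 2 * h * c * N = 2 * (c * N) / (2 * (c * N) + 1) by ring]
    exact div_le_one_of_le₀ (by linarith) (by positivity)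
  have hball : ∀ n : ℕ, ∀ t, |t| ≤ n * h → IntervalIntegrable f volume 0 t := by
    intro n
    induction n with
    | zero => intro t ht; rw [show t = 0 by simpa using ht]
    | succ n ih =>
      intro t ht
      have hn : (0 : ℝ) < n + 1 := by positivity
      refine IntervalIntegrable.extend_of_primitive_of_abs_sub_le hf hc hN hu hfv hv hh hhcN
        (s := t * n / (n + 1)) (ih _ ?_) ?_
      · rw [abs_div, abs_mul, abs_of_pos hn, Nat.abs_cast, div_le_iff₀ hn]
        push_cast at ht; nlinarith [abs_nonneg t]
      · rw [show t - t * n / (n + 1) = t / (n + 1) by field_simp; ring, abs_div, abs_of_pos hn,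
          div_le_iff₀ hn]
        push_cast at ht; linarith
  have hzero : ∀ t, IntervalIntegrable f volume 0 t := fun t => by
    obtain ⟨n, hn⟩ := exists_nat_ge (|t| / h)
    exact hball n t (by rwa [div_le_iff₀ hh0] at hn)
  exact (hzero s).symm.trans (hzero t)

end Continuation

theorem exists_abs_le_of_jumps_le {v : ℝ → ℝ} {p q c : ℝ} (hc : 0 ≤ c)
    (hright : ∀ τ ∈ Ico p q, ContinuousWithinAt v (Ioi τ) τ)
    (hleft : ∀ τ ∈ Ioc p q, ∀ ε > 0, ∀ᶠ t in 𝓝[<] τ, |v τ - v t| < 2 * c + ε)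
    {s₁ s₂ : ℝ} (hs₁ : s₁ ∈ Icc p q) (hs₂ : s₂ ∈ Icc p q) (h₁ : c < v s₁) (h₂ : v s₂ < -c) :
    ∃ τ ∈ Icc p q, |v τ| ≤ c := by
  wlog h₁₂ : s₁ < s₂ generalizing v s₁ s₂
  · have h₂₁ : s₂ < s₁ := lt_of_le_of_ne (not_lt.1 h₁₂) fun h => by rw [h] at h₂; linarith
    have hleft' : ∀ τ ∈ Ioc p q, ∀ ε > 0, ∀ᶠ t in 𝓝[<] τ, |(-v) τ - (-v) t| < 2 * c + ε := by
      simpa only [Pi.neg_apply, neg_sub_neg, abs_sub_comm] using hleft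
    obtain ⟨τ, hτ, hvτ⟩ := this (v := -v) (fun τ hτ => (hright τ hτ).neg) hleft' hs₂ hs₁
      (by simpa using neg_lt_neg h₂) (by simpa using h₁) h₂₁
    exact ⟨τ, hτ, by simpa using hvτ⟩
  by_contra! hbig
  set S := {t ∈ Icc s₁ s₂ | v t < -c}
  have hS : s₂ ∈ S := ⟨⟨h₁₂.le, le_rfl⟩, h₂⟩
  have hSbdd : BddBelow S := ⟨s₁, fun t ht => ht.1.1⟩
  set τ := sInf S
  have hτ : τ ∈ Icc s₁ s₂ := ⟨le_csInf ⟨s₂, hS⟩ fun t ht => ht.1.1, csInf_le hSbdd hS⟩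
  have hτpq : τ ∈ Icc p q := ⟨hs₁.1.trans hτ.1, hτ.2.trans hs₂.2⟩
  rcases lt_abs.1 (hbig τ hτpq) with hpos | hneg
  · -- `v` is above `c` at `τ` but below `-c` at points of `S` just to the right of `τ`
    have hτ₂ : τ < s₂ := lt_of_le_of_ne hτ.2 fun h => by rw [h] at hpos; linarith
    obtain ⟨δ, hδ, hclose⟩ := Metric.continuousWithinAt_iff.1
      (hright τ ⟨hτpq.1, hτ₂.trans_le hs₂.2⟩) (v τ + c) (by linarith)
    obtain ⟨t, htS, htδ⟩ := exists_lt_of_csInf_lt ⟨s₂, hS⟩ (lt_add_of_pos_right τ hδ)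
    have hτt : τ < t := lt_of_le_of_ne (csInf_le hSbdd htS) fun h => by
      rw [← h] at htS; linarith [htS.2]
    have := hclose hτt (by rw [Real.dist_eq, abs_of_pos (sub_pos.2 hτt)]; linarith)
    rw [Real.dist_eq] at this
    linarith [neg_abs_le (v t - v τ), htS.2]
  · -- `v` is below `-c` at `τ` but above `c` everywhere on `[s₁, τ)`
    have hτ₁ : s₁ < τ := lt_of_le_of_ne hτ.1 fun h => by rw [← h] at hneg; linarith
    obtain ⟨t, hjump, ht⟩ := ((hleft τ ⟨hs₁.1.trans_lt hτ₁, hτpq.2⟩ (-c - v τ)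
      (by linarith)).and (Ioo_mem_nhdsLT hτ₁)).exists
    have htS : t ∉ S := notMem_of_lt_csInf ht.2 hSbdd
    have hvt : c < v t := by
      rcases lt_abs.1 (hbig t ⟨hs₁.1.trans ht.1.le, ht.2.le.trans hτpq.2⟩) with h | h
      · exact h
      · exact absurd ⟨⟨ht.1.le, ht.2.le.trans hτ.2⟩, by linarith⟩ htS
    linarith [neg_abs_le (v τ - v t)]

lemma mul_sub_lt_integral_of_lt {f : ℝ → ℝ} {a b c : ℝ} (hab : a < b)
    (hf : IntervalIntegrable f volume a b) (hc : ∀ x ∈ Ioo a b, c < f x) :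
    c * (b - a) < ∫ x in a..b, f x := by
  have hpos := intervalIntegral.intervalIntegral_pos_of_pos_on (hf.sub intervalIntegrable_const)
    (fun x hx => sub_pos.2 (hc x hx)) hab
  rw [intervalIntegral.integral_sub hf intervalIntegrable_const, intervalIntegral.integral_const,
    smul_eq_mul] at hpos
  linarith

lemma Continuous.le_sSup_image_Ioc {g : ℝ → ℝ} (hg : Continuous g) {a b : ℝ} (hab : a < b) :
    ∀ t ∈ Icc a b, g t ≤ sSup (g '' Ioc a b) := by
  have hbdd : BddAbove (g '' Ioc a b) :=
    (isCompact_Icc.bddAbove_image hg.continuousOn).mono (image_mono Ioc_subset_Icc_self)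
  have hsub : Ioc a b ⊆ {t | g t ≤ sSup (g '' Ioc a b)} := fun t ht =>
    le_csSup hbdd (mem_image_of_mem g ht)
  rw [← closure_Ioc hab.ne]
  exact (isClosed_le hg continuous_const).closure_subset_iff.2 hsub

section Solution

variable {ρ : Measure ℝ} {a u v : ℝ → ℝ} {μp μm : Measure ℝ}

lemma AM.isFiniteMeasureOnCompacts (hAM : AM ρ a μp μm) : IsFiniteMeasureOnCompacts (μp + μm) :=
  ⟨fun K hK => by
    rw [Measure.add_apply]
    exact ENNReal.add_lt_top.2 ⟨hAM.finp K hK.isBounded, hAM.finm K hK.isBounded⟩⟩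

lemma AM.iInf_le_s9 (hAM : AM ρ a μp μm) (x : ℝ) : ⨅ y, a y ≤ a x := by
  refine ciInf_le ?_ x
  by_contra hbdd
  exact (Real.iInf_of_not_bddBelow hbdd ▸ hAM.inf_pos).false

lemma AM.le_supNorm (hAM : AM ρ a μp μm) (x : ℝ) : a x ≤ supNorm a :=
  le_csSup hAM.bddAbove ⟨x, rfl⟩

lemma IsSolution0.abs_sub_le [IsFiniteMeasureOnCompacts (μp + μm)]
    (hsol : IsSolution0 a μp μm u v) {s t M : ℝ} (hst : s ≤ t) (hM : ∀ x ∈ Ioc s t, |u x| ≤ M) :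
    |v t - v s| ≤ M * (μp + μm).real (Ioc s t) := by
  rw [hsol.eq_v s t hst]
  exact abs_setIntegral_sub_setIntegral_le measure_Ioc_lt_top hM

lemma IsSolution0.abs_sub_le_ceil_mul [IsFiniteMeasureOnCompacts (μp + μm)]
    (hsol : IsSolution0 a μp μm u v) (hunif : unifE (μp + μm) < ⊤) {α r M : ℝ} (hr : 0 ≤ r)
    (hM : ∀ x ∈ Icc α (α + r), |u x| ≤ M) {s t : ℝ} (hs : s ∈ Icc α (α + r))
    (ht : t ∈ Icc α (α + r)) : |v t - v s| ≤ ⌈r⌉ * unifNorm (μp + μm) * M := by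
  wlog hst : s ≤ t generalizing s t
  · rw [abs_sub_comm]; exact this ht hs (le_of_not_ge hst)
  have hM0 : 0 ≤ M := (abs_nonneg _).trans (hM t ht)
  calc |v t - v s| ≤ M * (μp + μm).real (Ioc s t) :=
        hsol.abs_sub_le hst fun x hx => hM x ⟨hs.1.trans hx.1.le, hx.2.trans ht.2⟩
    _ ≤ M * (⌈r⌉₊ * unifNorm (μp + μm)) := by
        gcongr
        exact measureReal_Ioc_le_nat_mul_unifNorm hunif _ (by linarith [Nat.le_ceil r, hs.1, ht.2])
    _ = ⌈r⌉ * unifNorm (μp + μm) * M := by rw [natCast_ceil_eq_intCast_ceil hr]; ring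

lemma IsSolution0.intervalIntegrable (hAM : AM ρ a μp μm) (hsol : IsSolution0 a μp μm u v)
    (s t : ℝ) : IntervalIntegrable (fun x => v x / a x) volume s t := by
  have := hAM.isFiniteMeasureOnCompacts
  have ha : ∀ x, 0 < a x := fun x => hAM.inf_pos.trans_le (hAM.iInf_le_s9 x)
  refine intervalIntegrable_of_primitive_of_abs_sub_le (f := fun x => v x / a x) (v := v)
    (c := (⨅ y, a y)⁻¹) (N := unifNorm (μp + μm)) (hsol.meas_v.div hAM.meas_a)
    (inv_nonneg.2 hAM.inf_pos.le) (unifNorm_nonneg _) hsol.eq_u (fun x => ?_)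
    (fun s t B hst hB => ?_) s t
  · rw [abs_div, abs_of_pos (ha x), inv_mul_eq_div]
    exact div_le_div_of_nonneg_left (abs_nonneg _) hAM.inf_pos (hAM.iInf_le_s9 x)
  wlog hle : s ≤ t generalizing s t
  · rw [abs_sub_comm]
    exact this t s (by rwa [abs_sub_comm]) (by rwa [uIcc_comm]) (le_of_not_ge hle)
  have hB0 : 0 ≤ B := (abs_nonneg _).trans (hB s left_mem_uIcc)
  have hν := measureReal_Ioc_le_nat_mul_unifNorm hAM.unif_lt_top 1
    (by push_cast; linarith [le_abs_self (t - s)] : t ≤ s + (1 : ℕ))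
  rw [Nat.cast_one, one_mul] at hν
  calc |v t - v s| ≤ B * (μp + μm).real (Ioc s t) :=
        hsol.abs_sub_le hle fun x hx => hB x (uIcc_of_le hle ▸ Ioc_subset_Icc_self hx)
    _ ≤ unifNorm (μp + μm) * B := by rw [mul_comm]; gcongr

lemma IsSolution0.sub_eq_integral_s9 (hAM : AM ρ a μp μm) (hsol : IsSolution0 a μp μm u v)
    (s t : ℝ) : u t - u s = ∫ x in s..t, v x / a x := by
  rw [hsol.eq_u t, hsol.eq_u s, ← intervalIntegral.integral_interval_sub_left
    (hsol.intervalIntegrable hAM 0 t) (hsol.intervalIntegrable hAM 0 s)]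
  ring

lemma IsSolution0.continuous (hAM : AM ρ a μp μm) (hsol : IsSolution0 a μp μm u v) :
    Continuous u := by
  rw [show u = fun t => u 0 + ∫ x in (0 : ℝ)..t, v x / a x from funext hsol.eq_u]
  exact continuous_const.add
    (intervalIntegral.continuous_primitive (hsol.intervalIntegrable hAM) 0)

lemma IsSolution0.continuousWithinAt_Ioi [IsFiniteMeasureOnCompacts (μp + μm)]
    (hsol : IsSolution0 a μp μm u v) {τ M : ℝ} (hM : ∀ᶠ x in 𝓝[>] τ, |u x| ≤ M) :
    ContinuousWithinAt v (Ioi τ) τ := by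
  obtain ⟨l, hl, hsub⟩ := mem_nhdsGT_iff_exists_Ioc_subset.1 hM
  have hν : Tendsto (fun t => M * (μp + μm).real (Ioc τ t)) (𝓝[>] τ) (𝓝 0) := by
    simpa only [mul_zero, ENNReal.toReal_zero, Function.comp_def, measureReal_def] using
      ((ENNReal.tendsto_toReal ENNReal.zero_ne_top).comp
        (tendsto_measure_Ioc_nhdsGT (μp + μm) τ)).const_mul M
  rw [ContinuousWithinAt, tendsto_iff_norm_sub_tendsto_zero]
  refine squeeze_zero' (Eventually.of_forall fun _ => norm_nonneg _) ?_ hν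
  filter_upwards [Ioo_mem_nhdsGT hl] with t ht
  exact hsol.abs_sub_le ht.1.le fun x hx => hsub ⟨hx.1, hx.2.trans ht.2.le⟩

lemma IsSolution0.eventually_abs_sub_lt [IsFiniteMeasureOnCompacts (μp + μm)]
    (hsol : IsSolution0 a μp μm u v) (hunif : unifE (μp + μm) < ⊤) {τ M ε : ℝ}
    (hM : ∀ᶠ x in 𝓝[≤] τ, |u x| ≤ M) (hε : 0 < ε) :
    ∀ᶠ t in 𝓝[<] τ, |v τ - v t| < M * unifNorm (μp + μm) + ε := by
  obtain ⟨l, hl, hsub⟩ := mem_nhdsLE_iff_exists_Ioc_subset.1 hM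
  have hatom : M * (μp + μm).real {τ} ≤ M * unifNorm (μp + μm) :=
    mul_le_mul_of_nonneg_left (measureReal_singleton_le_unifNorm hunif τ)
      ((abs_nonneg _).trans (hsub ⟨hl, le_rfl⟩))
  have hν : Tendsto (fun t => M * (μp + μm).real (Ioc t τ)) (𝓝[<] τ)
      (𝓝 (M * (μp + μm).real {τ})) :=
    ((ENNReal.tendsto_toReal measure_singleton_lt_top.ne).comp
      (tendsto_measure_Ioc_nhdsLT (μp + μm) τ)).const_mul M
  filter_upwards [hν.eventually (gt_mem_nhds (lt_add_of_pos_right _ hε)),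
    Ioo_mem_nhdsLT hl] with t ht htl
  exact (hsol.abs_sub_le htl.2.le fun x hx => hsub ⟨htl.1.trans hx.1, hx.2⟩).trans_lt
    (ht.trans_le (by linarith))

lemma IsSolution0.neg (hsol : IsSolution0 a μp μm u v) : IsSolution0 a μp μm (-u) (-v) where
  meas_u := hsol.meas_u.neg
  meas_v := hsol.meas_v.neg
  eq_u t := by
    simp only [Pi.neg_apply, neg_div, intervalIntegral.integral_neg]
    linarith [hsol.eq_u t]
  eq_v s t hst := by
    simp only [Pi.neg_apply, integral_neg]
    linarith [hsol.eq_v s t hst]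

lemma IsSolution0.exists_le_max_mul (hAM : AM ρ a μp μm) (hsol : IsSolution0 a μp μm u v)
    {α r M : ℝ} (hr : 0 < r) (hM : ∀ t ∈ Icc α (α + r), |u t| ≤ M) :
    ∃ s ∈ Ioo α (α + r), v s ≤ max (2 * supNorm a / r) (unifNorm (μp + μm) / 2) * M := by
  by_contra! hbig
  set K := max (2 * supNorm a / r) (unifNorm (μp + μm) / 2)
  set A := supNorm a
  have ha : ∀ x, 0 < a x := fun x => hAM.inf_pos.trans_le (hAM.iInf_le_s9 x)
  have hA : 0 < A := (ha 0).trans_le (hAM.le_supNorm 0)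
  have hM0 : 0 ≤ M := (abs_nonneg _).trans (hM α ⟨le_rfl, by linarith⟩)
  have hK : 2 * A / r ≤ K := le_max_left _ _
  have hKM : 0 ≤ K * M := mul_nonneg ((by positivity : 0 ≤ 2 * A / r).trans hK) hM0
  have hgrowth : K * M / A * r < u (α + r) - u α := by
    rw [hsol.sub_eq_integral_s9 hAM]
    simpa using mul_sub_lt_integral_of_lt (by linarith) (hsol.intervalIntegrable hAM _ _)
      fun x hx => ((div_lt_div_iff_of_pos_right hA).2 (hbig x hx)).trans_le
        (div_le_div_of_nonneg_left (hKM.trans (hbig x hx).le) (ha x) (hAM.le_supNorm x))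
  have h2M : 2 * M ≤ K * M / A * r := by
    rw [div_le_iff₀ hr] at hK
    rw [div_mul_eq_mul_div, le_div_iff₀ hA]
    nlinarith
  linarith [(abs_le.1 (hM α ⟨le_rfl, by linarith⟩)).1,
    (abs_le.1 (hM (α + r) ⟨by linarith, le_rfl⟩)).2]

lemma IsSolution0.exists_abs_le_max_mul (hAM : AM ρ a μp μm) (hsol : IsSolution0 a μp μm u v)
    {α r M : ℝ} (hr : 0 < r) (hM : ∀ t ∈ Icc α (α + r), |u t| ≤ M) :
    ∃ s ∈ Icc α (α + r), |v s| ≤ max (2 * supNorm a / r) (unifNorm (μp + μm) / 2) * M := by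
  have := hAM.isFiniteMeasureOnCompacts
  obtain ⟨s₁, hs₁, hv₁⟩ := hsol.exists_le_max_mul hAM hr hM
  obtain ⟨s₂, hs₂, hv₂⟩ := hsol.neg.exists_le_max_mul hAM hr (by simpa using hM)
  set K := max (2 * supNorm a / r) (unifNorm (μp + μm) / 2)
  have hM0 : 0 ≤ M := (abs_nonneg _).trans (hM α ⟨le_rfl, by linarith⟩)
  have hKM : 0 ≤ K * M :=
    mul_nonneg ((div_nonneg (unifNorm_nonneg _) zero_le_two).trans (le_max_right _ _)) hM0
  have hMN : M * unifNorm (μp + μm) ≤ 2 * (K * M) := by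
    nlinarith [le_max_right (2 * supNorm a / r) (unifNorm (μp + μm) / 2)]
  by_contra! hbig
  have hv₁' : v s₁ < -(K * M) := by
    have := (lt_abs.1 (hbig s₁ (Ioo_subset_Icc_self hs₁))).resolve_left (by linarith)
    linarith
  have hv₂' : K * M < v s₂ :=
    (lt_abs.1 (hbig s₂ (Ioo_subset_Icc_self hs₂))).resolve_right
      (by simp only [Pi.neg_apply] at hv₂; linarith)
  obtain ⟨τ, hτ, hvτ⟩ := exists_abs_le_of_jumps_le hKM
    (fun τ hτ => hsol.continuousWithinAt_Ioi <| mem_of_superset (Ioc_mem_nhdsGT hτ.2)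
      fun x hx => hM x ⟨hτ.1.trans hx.1.le, hx.2⟩)
    (fun τ hτ ε hε => (hsol.eventually_abs_sub_lt hAM.unif_lt_top (mem_of_superset
      (Ioc_mem_nhdsLE hτ.1) fun x hx => hM x ⟨hx.1.le, hx.2.trans hτ.2⟩) hε).mono
      fun t ht => ht.trans_le (by linarith))
    (Ioo_subset_Icc_self hs₂) (Ioo_subset_Icc_self hs₁) hv₂' hv₁'
  exact (hbig τ hτ).not_ge hvτ

end Solution

theorem quasi_derivative_control_general
    (ρ : MeasureTheory.Measure ℝ)
    (a : ℝ → ℝ) (μp μm : MeasureTheory.Measure ℝ) (hAM : AM ρ a μp μm)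
    (u v : ℝ → ℝ) (hsol : IsSolution0 a μp μm u v)
    (r : ℝ) (hr : 0 < r)
    (C : ℝ)
    (hC : C = max (2 * supNorm a / r) (unifNorm (μp + μm) / 2) +
      (⌈r⌉ : ℝ) * unifNorm (μp + μm)) :
    ∀ α : ℝ, sSup ((fun t => |v t|) '' Set.Ioc α (α + r)) ≤
      C * sSup ((fun t => |u t|) '' Set.Ioc α (α + r)) := by
  intro α
  have := hAM.isFiniteMeasureOnCompacts
  have hαr : α < α + r := lt_add_of_pos_right α hr
  have hM := (hsol.continuous hAM).abs.le_sSup_image_Ioc hαr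
  obtain ⟨s₀, hs₀, hv₀⟩ := hsol.exists_abs_le_max_mul hAM hr hM
  refine csSup_le ((nonempty_Ioc.2 hαr).image _) ?_
  rintro _ ⟨t, ht, rfl⟩
  have hinc := hsol.abs_sub_le_ceil_mul hAM.unif_lt_top hr.le hM hs₀ (Ioc_subset_Icc_self ht)
  rw [hC, add_mul]
  linarith [abs_sub_abs_le_abs_sub (v t) (v s₀)]

/-- Control of the quasi-derivative by the solution. -/
theorem quasi_derivative_control
    (ρ : MeasureTheory.Measure ℝ) (hρ0 : ρ ≠ 0) (hρfin : unifE ρ < ⊤)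
    (hρper : ∃ p : ℝ, IsPeriod ρ p)
    (a : ℝ → ℝ) (μp μm : MeasureTheory.Measure ℝ) (hAM : AM ρ a μp μm)
    (u v : ℝ → ℝ) (hsol : IsSolution0 a μp μm u v)
    (r : ℝ) (hr : 0 < r)
    (C : ℝ)
    (hC : C = max (2 * supNorm a / r) (unifNorm (μp + μm) / 2) +
      (⌈r⌉ : ℝ) * unifNorm (μp + μm)) :
    ∀ α : ℝ, sSup ((fun t => |v t|) '' Set.Ioc α (α + r)) ≤
      C * sSup ((fun t => |u t|) '' Set.Ioc α (α + r)) :=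
  quasi_derivative_control_general ρ a μp μm hAM u v hsol r hr C hC
end
end

section
/- Vanishing at infinity for almost-translation-invariant L_p functions: Let ρ be a nonzero nonnegative Borel measure on ℝ with sup_{t∈ℝ} ρ((t,t+1]) < ∞ which is periodic (there is p₀ ≠ 0 with ρ(B + p₀) = ρ(B) for every Borel set B). Let p ∈ [1, ∞) and let u : ℝ → ℂ be Borel measurable and right-continuous with ∫_ℝ |u|^p dρ < ∞. Assume that for every r > 0 one has |u(t + r) − u(t)| → 0 as |t| → ∞. Then u(t) → 0 as |t| → ∞. -/
open MeasureTheory Set Filter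

noncomputable section

/-! By Baire's theorem, applied to the closures of the sets of shifts `s` with
`‖u (t + s) - u t‖ ≤ γ` for `|t| ≥ n`, some open interval of shifts is good beyond a single radius;
right-continuity of `u` upgrades "in the closure" to "good". Differences of two shifts from that
interval control `u (t + τ) - u t` uniformly for small `τ ≥ 0` and large `|t|`, and finitely many
steps extend this to `τ ∈ [0, L]`. So if `‖u t‖ ≥ ε` with `|t|` large, then `‖u‖ ≥ ε / 2` on
`(t, t + L]`. Taking `L` longer than a period, these windows have `ρ`-mass bounded below, which
contradicts the vanishing of the tails of `∫ ‖u‖ ^ q dρ`. -/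

open scoped Topology ENNReal

theorem Real.eventually_cocompact_iff {P : ℝ → Prop} :
    (∀ᶠ t in cocompact ℝ, P t) ↔ ∃ R, ∀ t, R ≤ |t| → P t := by
  rw [← Metric.cobounded_eq_cocompact, ← comap_norm_atTop, eventually_comap, eventually_atTop]
  simp only [Real.norm_eq_abs]
  exact exists_congr fun R => ⟨fun h t ht => h _ ht t rfl, fun h b hb t ht => h t (ht ▸ hb)⟩

theorem frequently_mem_nhdsGT_of_Ioo_subset_closure {α : Type*} [TopologicalSpace α]
    [LinearOrder α] [OrderTopology α] [DenselyOrdered α] [NoMaxOrder α] {S : Set α} {a b x : α}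
    (h : Ioo a b ⊆ closure S) (hx : x ∈ Ioo a b) : ∃ᶠ y in 𝓝[>] x, y ∈ S := by
  rw [frequently_iff]
  intro U hU
  obtain ⟨c, hc, hcU⟩ := mem_nhdsGT_iff_exists_Ioo_subset.1 hU
  have hV : Ioo x (min c b) ⊆ closure S := (Ioo_subset_Ioo hx.1.le (min_le_right c b)).trans h
  obtain ⟨y, hyV, hyS⟩ := (closure_inter_open_nonempty_iff isOpen_Ioo).1
    ((nonempty_Ioo.2 (lt_min hc hx.2)).mono fun y hy => ⟨hV hy, hy⟩)
  exact ⟨y, hcU ⟨hyS.1, hyS.2.trans_le (min_le_left c b)⟩, hyV⟩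

section GoodShifts

variable {E : Type*} [SeminormedAddCommGroup E] {u : ℝ → E} {γ γ' R R' s s' : ℝ}

def goodShifts (u : ℝ → E) (γ R : ℝ) : Set ℝ :=
  {s | ∀ t, R ≤ |t| → ‖u (t + s) - u t‖ ≤ γ}

theorem goodShifts_mono (hγ : γ ≤ γ') (hR : R ≤ R') : goodShifts u γ R ⊆ goodShifts u γ' R' :=
  fun _ hs t ht => (hs t (hR.trans ht)).trans hγ

theorem zero_mem_goodShifts (hγ : 0 ≤ γ) : 0 ∈ goodShifts u γ R := fun t _ => by simpa using hγ

theorem add_mem_goodShifts (hs : s ∈ goodShifts u γ R) (hs' : s' ∈ goodShifts u γ' R) :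
    s + s' ∈ goodShifts u (γ + γ') (R + |s|) := by
  intro t ht
  have hts : R ≤ |t + s| := by
    have := abs_sub_abs_le_abs_sub t (-s)
    rw [abs_neg, sub_neg_eq_add] at this
    linarith
  calc ‖u (t + (s + s')) - u t‖ ≤ ‖u (t + s + s') - u (t + s)‖ + ‖u (t + s) - u t‖ := by
        rw [← add_assoc]; exact norm_sub_le_norm_sub_add_norm_sub _ _ _
    _ ≤ γ' + γ := add_le_add (hs' _ hts) (hs t (le_of_add_le_of_nonneg_left ht (abs_nonneg s)))
    _ = γ + γ' := add_comm _ _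

theorem neg_mem_goodShifts (hs : s ∈ goodShifts u γ R) : -s ∈ goodShifts u γ (R + |s|) := by
  intro t ht
  have hts : R ≤ |t - s| := by linarith [abs_sub_abs_le_abs_sub t s]
  simpa [← sub_eq_add_neg, norm_sub_rev] using hs (t - s) hts

theorem exists_mem_goodShifts
    (htrans : ∀ r, 0 < r → Tendsto (fun t => ‖u (t + r) - u t‖) (cocompact ℝ) (𝓝 0))
    (hγ : 0 < γ) (s : ℝ) : ∃ R, s ∈ goodShifts u γ R := by
  have pos : ∀ r, 0 < r → ∃ R, r ∈ goodShifts u γ R := fun r hr =>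
    Real.eventually_cocompact_iff.1 ((htrans r hr).eventually (eventually_le_nhds hγ))
  rcases lt_trichotomy s 0 with hs | rfl | hs
  · obtain ⟨R, hR⟩ := pos (-s) (neg_pos.2 hs)
    exact ⟨_, neg_neg s ▸ neg_mem_goodShifts hR⟩
  · exact ⟨0, zero_mem_goodShifts hγ.le⟩
  · exact pos s hs

theorem mem_goodShifts_of_frequently (hu : ∀ t, Tendsto u (𝓝[>] t) (𝓝 (u t)))
    (h : ∃ᶠ s' in 𝓝[>] s, s' ∈ goodShifts u γ R) : s ∈ goodShifts u γ R := fun t ht =>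
  (isClosed_le (continuous_id.sub continuous_const).norm continuous_const)
    |>.mem_of_frequently_of_tendsto (h.mono fun _ hs' => hs' t ht)
    (hu (t + s) |>.comp (tendsto_nhdsWithin_of_tendsto_nhds_of_eventually_within _
      (((continuous_const_add t).tendsto s).mono_left nhdsWithin_le_nhds)
      (eventually_nhdsWithin_of_forall fun _ h => (add_lt_add_iff_left t).2 h)))

theorem exists_Ioo_subset_goodShifts (hu : ∀ t, Tendsto u (𝓝[>] t) (𝓝 (u t)))
    (hcover : ∀ s, ∃ R, s ∈ goodShifts u γ R) : ∃ R a b, a < b ∧ Ioo a b ⊆ goodShifts u γ R := by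
  have hU : ⋃ n : ℕ, closure (goodShifts u γ n) = univ := eq_univ_of_forall fun s => by
    obtain ⟨R, hR⟩ := hcover s
    obtain ⟨n, hn⟩ := exists_nat_ge R
    exact mem_iUnion.2 ⟨n, subset_closure (goodShifts_mono le_rfl hn hR)⟩
  obtain ⟨n, y, hy⟩ := nonempty_interior_of_iUnion_of_closed (fun _ => isClosed_closure) hU
  obtain ⟨θ, hθ, hball⟩ := Metric.isOpen_iff.1 isOpen_interior y hy
  have hsub : Ioo (y - θ) (y + θ) ⊆ closure (goodShifts u γ n) :=
    (Real.ball_eq_Ioo y θ ▸ hball).trans interior_subset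
  exact ⟨n, y - θ, y + θ, by linarith, fun s hs =>
    mem_goodShifts_of_frequently hu (frequently_mem_nhdsGT_of_Ioo_subset_closure hsub hs)⟩

theorem exists_pos_Icc_subset_goodShifts (hu : ∀ t, Tendsto u (𝓝[>] t) (𝓝 (u t)))
    (htrans : ∀ r, 0 < r → Tendsto (fun t => ‖u (t + r) - u t‖) (cocompact ℝ) (𝓝 0))
    (hγ : 0 < γ) : ∃ θ > 0, ∃ R, Icc 0 θ ⊆ goodShifts u γ R := by
  obtain ⟨R, a, b, hab, hsub⟩ :=
    exists_Ioo_subset_goodShifts hu (exists_mem_goodShifts htrans (half_pos hγ))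
  set θ := (b - a) / 4 with hθ
  set c := a + θ with hc
  refine ⟨θ, by positivity, R + |c| + |-c|, fun τ ⟨hτ₀, hτθ⟩ => ?_⟩
  have hcτ : c + τ ∈ goodShifts u (γ / 2) (R + |c|) :=
    goodShifts_mono le_rfl (by simp) (hsub ⟨by linarith, by linarith⟩)
  have := add_mem_goodShifts (neg_mem_goodShifts (hsub ⟨by linarith, by linarith⟩)) hcτ
  rwa [neg_add_cancel_left, add_halves] at this

theorem exists_Icc_subset_goodShifts (hu : ∀ t, Tendsto u (𝓝[>] t) (𝓝 (u t)))
    (htrans : ∀ r, 0 < r → Tendsto (fun t => ‖u (t + r) - u t‖) (cocompact ℝ) (𝓝 0))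
    (hγ : 0 < γ) (L : ℝ) : ∃ R, Icc 0 L ⊆ goodShifts u γ R := by
  obtain ⟨θ, hθ, R₀, hR₀⟩ := exists_pos_Icc_subset_goodShifts hu htrans (half_pos hγ)
  have hmultiple : ∀ n : ℕ, ∃ R, Icc 0 (n * θ) ⊆ goodShifts u γ R := by
    intro n
    induction n with
    | zero =>
      refine ⟨0, fun r ⟨hr₀, hr⟩ => ?_⟩
      obtain rfl : r = 0 := by simp only [CharP.cast_eq_zero, zero_mul] at hr; linarith
      exact zero_mem_goodShifts hγ.le
    | succ n ih =>
      obtain ⟨Rₙ, hRₙ⟩ := ih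
      obtain ⟨R₁, hR₁⟩ := exists_mem_goodShifts htrans (half_pos hγ) (n * θ)
      refine ⟨max Rₙ (max R₁ R₀ + |n * θ|), fun r ⟨hr₀, hr⟩ => ?_⟩
      rcases le_total r (n * θ) with hrn | hrn
      · exact goodShifts_mono le_rfl (le_max_left _ _) (hRₙ ⟨hr₀, hrn⟩)
      · have hτ : r - n * θ ∈ goodShifts u (γ / 2) R₀ :=
          hR₀ ⟨sub_nonneg.2 hrn, by push_cast at hr; linarith⟩
        have := add_mem_goodShifts (goodShifts_mono le_rfl (le_max_left _ R₀) hR₁)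
          (goodShifts_mono le_rfl (le_max_right R₁ _) hτ)
        rw [add_sub_cancel, add_halves] at this
        exact goodShifts_mono le_rfl (le_max_right _ _) this
  obtain ⟨R, hR⟩ := hmultiple ⌈L / θ⌉₊
  exact ⟨R, (Icc_subset_Icc_right ((div_le_iff₀ hθ).1 (Nat.le_ceil _))).trans hR⟩

theorem eventually_forall_Icc_norm_sub_le (hu : ∀ t, Tendsto u (𝓝[>] t) (𝓝 (u t)))
    (htrans : ∀ r, 0 < r → Tendsto (fun t => ‖u (t + r) - u t‖) (cocompact ℝ) (𝓝 0))
    (hγ : 0 < γ) (L : ℝ) : ∀ᶠ t in cocompact ℝ, ∀ r ∈ Icc 0 L, ‖u (t + r) - u t‖ ≤ γ := by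
  obtain ⟨R, hR⟩ := exists_Icc_subset_goodShifts hu htrans hγ L
  exact Real.eventually_cocompact_iff.2 ⟨R, fun t ht r hr => hR hr t ht⟩

end GoodShifts

section PeriodicMeasure

def measurePeriods (ρ : Measure ℝ) : AddSubgroup ℝ where
  carrier := {c | ∀ B, ρ ((· - c) ⁻¹' B) = ρ B}
  zero_mem' B := by simp
  add_mem' {c d} hc hd B := by
    have hB : (· - (c + d)) ⁻¹' B = (· - c) ⁻¹' ((· - d) ⁻¹' B) := by ext; simp [sub_sub]
    rw [hB, hc, hd]
  neg_mem' {c} hc B := by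
    calc ρ ((· - -c) ⁻¹' B) = ρ ((· - c) ⁻¹' ((· - -c) ⁻¹' B)) := (hc _).symm
      _ = ρ B := by congr 1; ext; simp

variable {ρ : Measure ℝ} {p : ℝ}

theorem measure_Ioc_add_of_mem_measurePeriods {c : ℝ} (hc : c ∈ measurePeriods ρ) (a b : ℝ) :
    ρ (Ioc (a + c) (b + c)) = ρ (Ioc a b) := by
  rw [← preimage_sub_const_Ioc]
  exact hc _

theorem exists_measure_Ioc_ne_zero (hρ : ρ ≠ 0) : ∃ a : ℝ, ρ (Ioc a (a + 1)) ≠ 0 := by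
  by_contra! h
  apply hρ
  rw [← Measure.measure_univ_eq_zero, ← iUnion_Ioc_intCast]
  exact measure_iUnion_null fun n => h n

theorem exists_forall_le_measure_Ioc (hρ : ρ ≠ 0) (hp : IsPeriod ρ p) :
    ∃ η ≠ 0, ∀ t, η ≤ ρ (Ioc t (t + (|p| + 1))) := by
  obtain ⟨a, ha⟩ := exists_measure_Ioc_ne_zero hρ
  have hp' : p ∈ measurePeriods ρ := hp.2
  have hper : |p| ∈ measurePeriods ρ := by
    rcases abs_choice p with h | h <;> rw [h]
    exacts [hp', neg_mem hp']
  refine ⟨_, ha, fun t => ?_⟩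
  obtain ⟨m, ⟨hm₁, hm₂⟩, -⟩ := existsUnique_add_zsmul_mem_Ico (abs_pos.2 hp.1) a t
  rw [← measure_Ioc_add_of_mem_measurePeriods (zsmul_mem hper m)]
  exact measure_mono (Ioc_subset_Ioc hm₁ (by linarith))

end PeriodicMeasure

theorem tendsto_setLIntegral_lt_abs_atTop {μ : Measure ℝ} {f : ℝ → ℝ≥0∞}
    (hf : ∫⁻ x, f x ∂μ ≠ ∞) :
    Tendsto (fun R => ∫⁻ x in {x | R < |x|}, f x ∂μ) atTop (𝓝 0) := by
  have hmeas (R : ℝ) : MeasurableSet {x : ℝ | R < |x|} :=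
    measurableSet_lt measurable_const measurable_abs
  have hlim := tendsto_measure_iInter_atTop (μ := μ.withDensity f)
    (fun R => (hmeas R).nullMeasurableSet)
    (fun R R' hR x hx => lt_of_le_of_lt hR hx)
    ⟨0, by
      rw [withDensity_apply _ (hmeas 0)]
      exact ne_top_of_le_ne_top hf (setLIntegral_le_lintegral _ _)⟩
  have hempty : ⋂ R : ℝ, {x : ℝ | R < |x|} = ∅ :=
    eq_empty_of_forall_notMem fun x hx => lt_irrefl |x| (mem_iInter.1 hx |x|)
  simpa only [hempty, measure_empty, Function.comp_def, withDensity_apply _ (hmeas _)] using hlim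

theorem eventually_exists_mem_Ioc_lt {ρ : Measure ℝ} {f : ℝ → ℝ≥0∞} {η c : ℝ≥0∞} {L : ℝ}
    (hf : ∫⁻ x, f x ∂ρ ≠ ∞) (hη : η ≠ 0) (hmass : ∀ t, η ≤ ρ (Ioc t (t + L))) (hc : c ≠ 0) :
    ∀ᶠ t in cocompact ℝ, ∃ x ∈ Ioc t (t + L), f x < c := by
  obtain ⟨R, hR⟩ := eventually_atTop.1
    ((tendsto_setLIntegral_lt_abs_atTop hf).eventually_lt_const (ENNReal.mul_pos hc hη))
  refine Real.eventually_cocompact_iff.2 ⟨R + L + 1, fun t ht => ?_⟩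
  by_contra! hge
  have hsub : Ioc t (t + L) ⊆ {x | R < |x|} := fun x ⟨hx₁, hx₂⟩ => by
    have := abs_sub_abs_le_abs_sub t x
    rw [abs_sub_comm, abs_of_pos (sub_pos.2 hx₁)] at this
    show R < |x|
    linarith
  refine (hR R le_rfl).not_ge ?_
  calc c * η ≤ c * ρ (Ioc t (t + L)) := by gcongr; exact hmass t
    _ = ∫⁻ _ in Ioc t (t + L), c ∂ρ := (setLIntegral_const _ _).symm
    _ ≤ ∫⁻ x in Ioc t (t + L), f x ∂ρ := setLIntegral_mono' measurableSet_Ioc hge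
    _ ≤ ∫⁻ x in {x | R < |x|}, f x ∂ρ := lintegral_mono_set hsub

theorem vanishing_at_infinity_general
    (ρ : MeasureTheory.Measure ℝ) (hρ0 : ρ ≠ 0)
    (hρper : ∃ p₀ : ℝ, IsPeriod ρ p₀)
    (q : ℝ) (hq : 1 ≤ q)
    (u : ℝ → ℂ)
    (hu_rc : ∀ t : ℝ, Tendsto u (nhdsWithin t (Set.Ioi t)) (nhds (u t)))
    (hLp : (∫⁻ x, ENNReal.ofReal (‖u x‖ ^ q) ∂ρ) < ⊤)
    (htrans : ∀ r : ℝ, 0 < r →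
      Tendsto (fun t => ‖u (t + r) - u t‖) (Filter.cocompact ℝ) (nhds 0)) :
    Tendsto u (Filter.cocompact ℝ) (nhds 0) := by
  obtain ⟨p₀, hp₀⟩ := hρper
  obtain ⟨η, hη, hmass⟩ := exists_forall_le_measure_Ioc hρ0 hp₀
  have hq₀ : 0 < q := by linarith
  rw [Metric.tendsto_nhds]
  intro ε hε
  filter_upwards [eventually_forall_Icc_norm_sub_le hu_rc htrans (half_pos hε) (|p₀| + 1),
    eventually_exists_mem_Ioc_lt (c := ENNReal.ofReal ((ε / 2) ^ q)) hLp.ne hη hmass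
      (ENNReal.ofReal_pos.2 (by positivity)).ne']
    with t hclose ⟨x, ⟨hx₁, hx₂⟩, hux⟩
  rw [ENNReal.ofReal_lt_ofReal_iff (by positivity),
    Real.rpow_lt_rpow_iff (norm_nonneg _) (by positivity) hq₀] at hux
  have hxt := hclose (x - t) ⟨by linarith, by linarith⟩
  rw [add_sub_cancel] at hxt
  rw [dist_zero_right]
  linarith [norm_le_norm_add_norm_sub (u x) (u t)]

/-- Vanishing at infinity for almost-translation-invariant `L_p` functions. -/
theorem vanishing_at_infinity
    (ρ : MeasureTheory.Measure ℝ) (hρ0 : ρ ≠ 0) (hρfin : unifE ρ < ⊤)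
    (hρper : ∃ p₀ : ℝ, IsPeriod ρ p₀)
    (q : ℝ) (hq : 1 ≤ q)
    (u : ℝ → ℂ) (hu_meas : Measurable u)
    (hu_rc : ∀ t : ℝ, Tendsto u (nhdsWithin t (Set.Ioi t)) (nhds (u t)))
    (hLp : (∫⁻ x, ENNReal.ofReal (‖u x‖ ^ q) ∂ρ) < ⊤)
    (htrans : ∀ r : ℝ, 0 < r →
      Tendsto (fun t => ‖u (t + r) - u t‖) (Filter.cocompact ℝ) (nhds 0)) :
    Tendsto u (Filter.cocompact ℝ) (nhds 0) :=
  vanishing_at_infinity_general ρ hρ0 hρper q hq u hu_rc hLp htrans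
end
end
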